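/- arXiv:1710.08228 — 11 statements merged into one kernel-verified Lean document; each statement's English description precedes it below -/
import Mathlib

section
/- For every even d ≥ 0, the group Z_2^d contains a Sidon set of size 2^{d/2}; that is, β(Z_2^d) ≥ 2^{d/2} for even d. -/
/-- A Sidon set in an abelian group: all pairwise sums of (distinct) elements are
different, i.e. whenever `a + b = c + d` for `a, b, c, d ∈ A` (with `a ≠ b`, `c ≠ d`),
then `{a, b} = {c, d}`. -/
def IsSidonSet {G : Type*} [AddCommGroup G] (A : Set G) : Prop :=
  ∀ a ∈ A, ∀ b ∈ A, ∀ c ∈ A, ∀ d ∈ A,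
    a ≠ b → c ≠ d → a + b = c + d → ({a, b} : Set G) = {c, d}

/-- `β G`: the largest size of a Sidon set in the finite abelian group `G`. -/
noncomputable def sidonNumber (G : Type*) [AddCommGroup G] [Fintype G] : ℕ :=
  sSup {n | ∃ A : Finset G, IsSidonSet (A : Set G) ∧ A.card = n}

/-! In the field `F = GF(2^k)`, the graph `{(x, x³)}` of the cube map is a Sidon set of size `2^k`
in `F × F`, which is `ℤ₂^(2k)` as an additive group. Indeed, in characteristic two
`x³ + y³ = s (s² + x y)` with `s = x + y`, which is nonzero for `x ≠ y`; so the sum and the sum of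
cubes of a pair determine its product, hence the pair itself. -/

section IsSidonSet

variable {G H : Type*} [AddCommGroup G] [AddCommGroup H]

theorem Set.Subsingleton.isSidonSet {A : Set G} (hA : A.Subsingleton) : IsSidonSet A :=
  fun _ ha _ hb _ _ _ _ hab _ _ => absurd (hA ha hb) hab

theorem IsSidonSet.image {A : Set G} (hA : IsSidonSet A) {f : G →+ H}
    (hf : Function.Injective f) : IsSidonSet (f '' A) := by
  rintro _ ⟨a, ha, rfl⟩ _ ⟨b, hb, rfl⟩ _ ⟨c, hc, rfl⟩ _ ⟨d, hd, rfl⟩ hab hcd hsum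
  rw [← map_add, ← map_add] at hsum
  rw [← Set.image_pair, ← Set.image_pair,
    hA a ha b hb c hc d hd (ne_of_apply_ne f hab) (ne_of_apply_ne f hcd) (hf hsum)]

theorem card_le_sidonNumber [Fintype G] {A : Finset G} (hA : IsSidonSet (A : Set G)) :
    A.card ≤ sidonNumber G :=
  le_csSup ⟨Fintype.card G, fun _ ⟨B, _, hB⟩ => hB ▸ B.card_le_univ⟩ ⟨A, hA, rfl⟩

end IsSidonSet

section CharTwo

variable {F : Type*} [Field F] [CharP F 2]

theorem CharTwo.eq_or_eq_of_add_eq_of_cube_add_eq {x y u v : F} (hxy : x ≠ y)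
    (hsum : x + y = u + v) (hcube : x ^ 3 + y ^ 3 = u ^ 3 + v ^ 3) :
    (u = x ∧ v = y) ∨ (u = y ∧ v = x) := by
  have two : (2 : F) = 0 := CharTwo.two_eq_zero
  have hs : x + y ≠ 0 := by rwa [← CharTwo.sub_eq_add, sub_ne_zero]
  have hprod : x * y = u * v := by
    refine mul_right_cancel₀ hs ?_
    linear_combination hcube - ((x + y) ^ 2 + (x + y) * (u + v) + (u + v) ^ 2 + u * v) * hsum
      + 2 * (x ^ 2 * y + x * y ^ 2 - u ^ 2 * v - u * v ^ 2) * two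
  have hv : (v - x) * (v - y) = 0 := by linear_combination -v * hsum + hprod
  rcases mul_eq_zero.1 hv with hv | hv
  · right
    refine ⟨?_, sub_eq_zero.1 hv⟩
    linear_combination hv - hsum + (x - v) * two
  · left
    refine ⟨?_, sub_eq_zero.1 hv⟩
    linear_combination hv - hsum + (y - v) * two

theorem isSidonSet_range_cube : IsSidonSet (Set.range fun x : F => (x, x ^ 3)) := by
  rintro _ ⟨x, rfl⟩ _ ⟨y, rfl⟩ _ ⟨u, rfl⟩ _ ⟨v, rfl⟩ hxy _ hsum
  rcases CharTwo.eq_or_eq_of_add_eq_of_cube_add_eq (ne_of_apply_ne (fun x : F => (x, x ^ 3)) hxy)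
    (congrArg Prod.fst hsum) (congrArg Prod.snd hsum) with ⟨rfl, rfl⟩ | ⟨rfl, rfl⟩
  · rfl
  · exact Set.pair_comm _ _

end CharTwo

theorem exists_isSidonSet_card_eq_two_pow (k : ℕ) :
    ∃ A : Finset (Fin (k + k) → ZMod 2), IsSidonSet (A : Set (Fin (k + k) → ZMod 2)) ∧
      A.card = 2 ^ k := by
  -- `GaloisField 2 0` is `ZMod 2`, not a field with `2 ^ 0` elements.
  obtain rfl | hk := eq_or_ne k 0
  · exact ⟨{0}, by simp [Set.Subsingleton.isSidonSet], rfl⟩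
  let F := GaloisField 2 k
  have : Fintype F := Fintype.ofFinite F
  have hrank :
      Module.finrank (ZMod 2) (F × F) = Module.finrank (ZMod 2) (Fin (k + k) → ZMod 2) := by
    rw [Module.finrank_prod, GaloisField.finrank 2 hk, Module.finrank_fin_fun]
  let e := LinearEquiv.ofFinrankEq _ _ hrank
  refine ⟨Finset.univ.image fun x : F => e (x, x ^ 3), ?_, ?_⟩
  · simp only [Finset.coe_image, Finset.coe_univ, Set.image_univ]
    have := isSidonSet_range_cube.image (f := e.toAddMonoidHom) e.injective
    rwa [← Set.range_comp] at this
  · rw [Finset.card_image_of_injective _ fun x y h => congrArg Prod.fst (e.injective h),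
      Finset.card_univ, ← Nat.card_eq_fintype_card, GaloisField.card 2 k hk]

/-- For every even `d ≥ 0`, the group `ℤ₂^d` contains a Sidon set of size `2^(d/2)`;
that is, `β(ℤ₂^d) ≥ 2^(d/2)` for even `d`. -/
theorem sidon_lower_bound_even (d : ℕ) (hd : Even d) :
    (∃ A : Finset (Fin d → ZMod 2),
      IsSidonSet (A : Set (Fin d → ZMod 2)) ∧ A.card = 2 ^ (d / 2)) ∧
    2 ^ (d / 2) ≤ sidonNumber (Fin d → ZMod 2) := by
  obtain ⟨k, rfl⟩ := hd
  obtain ⟨A, hA, hcard⟩ := exists_isSidonSet_card_eq_two_pow k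
  rw [show (k + k) / 2 = k by omega, ← hcard]
  exact ⟨⟨A, hA, rfl⟩, card_le_sidonNumber hA⟩
end

section
/- The maximum sizes of Sidon sets in small binary groups are: β(Z_2^1) = 2, β(Z_2^2) = 3, β(Z_2^3) = 4, and β(Z_2^4) = 6. -/
/-- Decidable version of the Sidon condition for finsets. -/
def IsSidonF {G : Type*} [AddCommGroup G] [DecidableEq G] (A : Finset G) : Prop :=
  ∀ a ∈ A, ∀ b ∈ A, ∀ c ∈ A, ∀ d ∈ A,
    a ≠ b → c ≠ d → a + b = c + d → (a = c ∧ b = d) ∨ (a = d ∧ b = c)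

instance {G : Type*} [AddCommGroup G] [DecidableEq G] (A : Finset G) :
    Decidable (IsSidonF A) := by unfold IsSidonF; infer_instance

lemma isSidonF_iff {G : Type*} [AddCommGroup G] [DecidableEq G] (A : Finset G) :
    IsSidonSet (A : Set G) ↔ IsSidonF A := by
  constructor
  · intro h a ha b hb c hc d hd hab hcd he
    exact Set.pair_eq_pair_iff.mp (h a ha b hb c hc d hd hab hcd he)
  · intro h a ha b hb c hc d hd hab hcd he
    exact Set.pair_eq_pair_iff.mpr (h a ha b hb c hc d hd hab hcd he)

/-- Counting bound: a Sidon set in a group of exponent 2 satisfies n² - n ≤ 2(|G|-1). -/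
lemma sidon_card_bound {G : Type*} [AddCommGroup G] [Fintype G] [DecidableEq G]
    (h2 : ∀ x : G, x + x = 0) {A : Finset G} (hA : IsSidonSet (A : Set G)) :
    A.card * A.card - A.card ≤ 2 * (Fintype.card G - 1) := by
  have key : A.offDiag.card ≤ 2 * ((A.offDiag.image fun p => p.1 + p.2).card) := by
    apply Finset.card_le_mul_card_image
    intro c hc
    obtain ⟨p, hp, hpc⟩ := Finset.mem_image.mp hc
    obtain ⟨ha, hb, hab⟩ := Finset.mem_offDiag.mp hp
    have : A.offDiag.filter (fun x => x.1 + x.2 = c) ⊆ {p, (p.2, p.1)} := by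
      intro q hq
      obtain ⟨hq1, hq2⟩ := Finset.mem_filter.mp hq
      obtain ⟨hx, hy, hxy⟩ := Finset.mem_offDiag.mp hq1
      have := hA q.1 hx q.2 hy p.1 ha p.2 hb hxy hab (by rw [hq2, hpc])
      rcases Set.pair_eq_pair_iff.mp this with ⟨h1, h2⟩ | ⟨h1, h2⟩
      · simp [Finset.mem_insert, Prod.ext_iff, h1, h2]
      · simp [Finset.mem_insert, Prod.ext_iff, h1, h2]
    calc (A.offDiag.filter (fun x => x.1 + x.2 = c)).card
        ≤ ({p, (p.2, p.1)} : Finset (G × G)).card := Finset.card_le_card this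
      _ ≤ 2 := Finset.card_insert_le _ _ |>.trans (by simp)
  have himg : (A.offDiag.image fun p => p.1 + p.2).card ≤ Fintype.card G - 1 := by
    have hsub : (A.offDiag.image fun p => p.1 + p.2) ⊆ Finset.univ.erase 0 := by
      intro c hc
      obtain ⟨p, hp, hpc⟩ := Finset.mem_image.mp hc
      obtain ⟨_, _, hab⟩ := Finset.mem_offDiag.mp hp
      refine Finset.mem_erase.mpr ⟨?_, Finset.mem_univ _⟩
      intro h0
      apply hab
      have : p.1 + p.2 + p.2 = p.2 := by rw [hpc, h0]; simp
      rwa [add_assoc, h2, add_zero] at this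
    calc (A.offDiag.image fun p => p.1 + p.2).card
        ≤ (Finset.univ.erase (0 : G)).card := Finset.card_le_card hsub
      _ = Fintype.card G - 1 := by rw [Finset.card_erase_of_mem (Finset.mem_univ _),
          Finset.card_univ]
  calc A.card * A.card - A.card = A.offDiag.card := (Finset.offDiag_card A).symm
    _ ≤ 2 * ((A.offDiag.image fun p => p.1 + p.2).card) := key
    _ ≤ 2 * (Fintype.card G - 1) := by omega

lemma two_torsion (d : ℕ) (x : Fin d → ZMod 2) : x + x = 0 := by
  funext i
  exact CharTwo.add_self_eq_zero (x i)

lemma sidon_eq {G : Type*} [AddCommGroup G] [Fintype G] [DecidableEq G] (n : ℕ)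
    (h2 : ∀ x : G, x + x = 0)
    (A : Finset G) (hA : IsSidonF A) (hcard : A.card = n)
    (hbd : ∀ m : ℕ, m * m - m ≤ 2 * (Fintype.card G - 1) → m ≤ n) :
    sidonNumber G = n := by
  apply IsGreatest.csSup_eq
  constructor
  · exact ⟨A, (isSidonF_iff A).mpr hA, hcard⟩
  · rintro m ⟨B, hB, rfl⟩
    exact hbd _ (sidon_card_bound h2 hB)

/-- `β(ℤ₂^1) = 2`, `β(ℤ₂^2) = 3`, `β(ℤ₂^3) = 4`, and `β(ℤ₂^4) = 6`. -/
theorem sidon_small_exact :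
    sidonNumber (Fin 1 → ZMod 2) = 2 ∧
    sidonNumber (Fin 2 → ZMod 2) = 3 ∧
    sidonNumber (Fin 3 → ZMod 2) = 4 ∧
    sidonNumber (Fin 4 → ZMod 2) = 6 := by
  refine ⟨?_, ?_, ?_, ?_⟩
  · refine sidon_eq 2 (two_torsion 1) {![0], ![1]} (by decide) (by decide) ?_
    intro m hm
    norm_num [Fintype.card_fun] at hm
    by_contra h
    push_neg at h
    have e : m * m - m + m = m * m :=
      Nat.sub_add_cancel (Nat.le_mul_of_pos_left m (by omega))
    nlinarith
  · refine sidon_eq 3 (two_torsion 2) {![0,0], ![1,0], ![0,1]} (by decide) (by decide) ?_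
    intro m hm
    norm_num [Fintype.card_fun] at hm
    by_contra h
    push_neg at h
    have e : m * m - m + m = m * m :=
      Nat.sub_add_cancel (Nat.le_mul_of_pos_left m (by omega))
    nlinarith
  · refine sidon_eq 4 (two_torsion 3)
      {![0,0,0], ![1,0,0], ![0,1,0], ![0,0,1]} (by decide) (by decide) ?_
    intro m hm
    norm_num [Fintype.card_fun] at hm
    by_contra h
    push_neg at h
    have e : m * m - m + m = m * m :=
      Nat.sub_add_cancel (Nat.le_mul_of_pos_left m (by omega))
    nlinarith
  · refine sidon_eq 6 (two_torsion 4)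
      {![0,0,0,0], ![1,0,0,0], ![0,1,0,0], ![0,0,1,0], ![0,0,0,1], ![1,1,1,1]}
      (by decide) (by decide) ?_
    intro m hm
    norm_num [Fintype.card_fun] at hm
    by_contra h
    push_neg at h
    have e : m * m - m + m = m * m :=
      Nat.sub_add_cancel (Nat.le_mul_of_pos_left m (by omega))
    nlinarith
end

section
/- For every m ≥ 1 and d ≥ 1, s_{2m}(Z_2^d) ≤ β_{2m}(Z_2^d) + 2m − 1. Equivalently: every multiset of β_{2m}(Z_2^d) + 2m − 1 elements of Z_2^d contains a sub-multiset of size 2m whose elements sum to zero. -/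
/-- `A` is a zero-free set of rank `r`: the sum of any `r` pairwise distinct
elements of `A` is nonzero. -/
def IsZeroFreeSet {G : Type*} [AddCommGroup G] (r : ℕ) (A : Finset G) : Prop :=
  ∀ B ⊆ A, B.card = r → ∑ x ∈ B, x ≠ 0

/-- `β_r(G)`: the largest size of a zero-free set of rank `r` in `G`. -/
noncomputable def zeroFreeNumber (G : Type*) [AddCommGroup G] [Fintype G] (r : ℕ) : ℕ :=
  sSup {n | ∃ A : Finset G, IsZeroFreeSet r A ∧ A.card = n}

/-- `s_r(G)`: the smallest `s` such that every multiset of `s` elements of `G`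
has a zero-sum sub-multiset of size `r`. -/
noncomputable def egzConst (G : Type*) [AddCommGroup G] [Fintype G] (r : ℕ) : ℕ :=
  sInf {s | ∀ S : Multiset G, Multiset.card S = s →
    ∃ T ≤ S, Multiset.card T = r ∧ T.sum = 0}

namespace Multiset

variable {α : Type*}

theorem exists_eq_add_add_nodup [DecidableEq α] (S : Multiset α) :
    ∃ P R : Multiset α, S = P + P + R ∧ R.Nodup := by
  induction S using Multiset.induction with
  | empty => exact ⟨0, 0, rfl, nodup_zero⟩
  | cons a S ih =>
    obtain ⟨P, R, rfl, hR⟩ := ih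
    by_cases ha : a ∈ R
    · obtain ⟨R', rfl⟩ := exists_cons_of_mem ha
      refine ⟨a ::ₘ P, R', ?_, (nodup_cons.1 hR).2⟩
      simp only [cons_add, add_cons]
    · exact ⟨P, a ::ₘ R, by rw [add_cons], nodup_cons.2 ⟨ha, hR⟩⟩

theorem exists_le_card_eq {S : Multiset α} {n : ℕ} (hn : n ≤ card S) :
    ∃ T ≤ S, card T = n := by
  have : 0 < card (powersetCard n S) := by
    rw [card_powersetCard]; exact Nat.choose_pos hn
  obtain ⟨T, hT⟩ := card_pos_iff_exists_mem.1 this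
  exact ⟨T, mem_powersetCard.1 hT⟩

end Multiset

section ZeroFree

variable {G : Type*} [AddCommGroup G] [Fintype G]

theorem IsZeroFreeSet.card_le_zeroFreeNumber {r : ℕ} {A : Finset G} (hA : IsZeroFreeSet r A) :
    A.card ≤ zeroFreeNumber G r :=
  le_csSup ⟨Fintype.card G, fun _ ⟨B, _, hB⟩ => hB ▸ B.card_le_univ⟩ ⟨A, hA, rfl⟩

theorem exists_sum_eq_zero_of_zeroFreeNumber_lt {r : ℕ} {A : Finset G}
    (hA : zeroFreeNumber G r < A.card) : ∃ B ⊆ A, B.card = r ∧ ∑ x ∈ B, x = 0 := by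
  by_contra! h
  exact hA.not_ge (IsZeroFreeSet.card_le_zeroFreeNumber h)

theorem Multiset.Nodup.exists_sum_eq_zero_of_zeroFreeNumber_lt {r : ℕ} {R : Multiset G}
    (hR : R.Nodup) (hcard : zeroFreeNumber G r < Multiset.card R) :
    ∃ T ≤ R, Multiset.card T = r ∧ T.sum = 0 := by
  classical
  obtain ⟨B, hBR, hB, hBsum⟩ := _root_.exists_sum_eq_zero_of_zeroFreeNumber_lt
    (A := R.toFinset) (by rwa [Multiset.toFinset_card_of_nodup hR])
  refine ⟨B.val, (Multiset.le_iff_subset B.nodup).2 fun x hx => ?_, hB, ?_⟩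
  · exact Multiset.mem_toFinset.1 (hBR hx)
  · rwa [Finset.sum_eq_multiset_sum, Multiset.map_id'] at hBsum

/-- Split `S` as `P + P + R` with `R` duplicate-free: `m` elements of `P`, each taken twice,
sum to zero; if `P` has fewer than `m` elements, `R` has more than `β_{2m}` elements. -/
theorem exists_sum_eq_zero_of_zeroFreeNumber_add_le (hG : ∀ x : G, x + x = 0) {m : ℕ}
    {S : Multiset G} (hS : zeroFreeNumber G (2 * m) + 2 * m - 1 ≤ Multiset.card S) :
    ∃ T ≤ S, Multiset.card T = 2 * m ∧ T.sum = 0 := by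
  classical
  obtain ⟨P, R, rfl, hR⟩ := S.exists_eq_add_add_nodup
  by_cases hP : m ≤ Multiset.card P
  · obtain ⟨Q, hQP, hQ⟩ := Multiset.exists_le_card_eq hP
    refine ⟨Q + Q, (add_le_add hQP hQP).trans (Multiset.le_add_right _ _), ?_, ?_⟩
    · rw [Multiset.card_add, hQ, two_mul]
    · rw [Multiset.sum_add, hG]
  · obtain ⟨T, hTR, hT⟩ := hR.exists_sum_eq_zero_of_zeroFreeNumber_lt (r := 2 * m)
      (by simp only [Multiset.card_add] at hS; omega)
    exact ⟨T, hTR.trans (Multiset.le_add_left _ _), hT⟩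

end ZeroFree

theorem egz_le_zeroFree_add_general (m d : ℕ) :
    (∀ S : Multiset (Fin d → ZMod 2),
      Multiset.card S = zeroFreeNumber (Fin d → ZMod 2) (2 * m) + 2 * m - 1 →
      ∃ T ≤ S, Multiset.card T = 2 * m ∧ T.sum = 0) ∧
    egzConst (Fin d → ZMod 2) (2 * m) ≤
      zeroFreeNumber (Fin d → ZMod 2) (2 * m) + 2 * m - 1 := by
  have hG (x : Fin d → ZMod 2) : x + x = 0 := funext fun i => CharTwo.add_self_eq_zero (x i)
  refine ⟨fun S hS => ?_, Nat.sInf_le fun S hS => ?_⟩ <;>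
    exact exists_sum_eq_zero_of_zeroFreeNumber_add_le hG hS.ge

/-- For every `m ≥ 1` and `d ≥ 1`, `s_{2m}(ℤ₂^d) ≤ β_{2m}(ℤ₂^d) + 2m − 1`;
equivalently, every multiset of `β_{2m}(ℤ₂^d) + 2m − 1` elements of `ℤ₂^d` contains
a sub-multiset of size `2m` whose elements sum to zero. -/
theorem egz_le_zeroFree_add (m d : ℕ) (hm : 1 ≤ m) (hd : 1 ≤ d) :
    (∀ S : Multiset (Fin d → ZMod 2),
      Multiset.card S = zeroFreeNumber (Fin d → ZMod 2) (2 * m) + 2 * m - 1 →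
      ∃ T ≤ S, Multiset.card T = 2 * m ∧ T.sum = 0) ∧
    egzConst (Fin d → ZMod 2) (2 * m) ≤
      zeroFreeNumber (Fin d → ZMod 2) (2 * m) + 2 * m - 1 :=
  egz_le_zeroFree_add_general m d
end

section
/- For every d ≥ 1, s_4(Z_2^d) ≤ sqrt(2^{d+1} − 7/4) + 7/2. Equivalently: every multiset of elements of Z_2^d whose size is at least sqrt(2^{d+1} − 7/4) + 7/2 contains a sub-multiset of size 4 whose elements sum to zero. -/
/-!
If some element occurs four times, or two distinct elements occur twice each, they form a
zero-sum quadruple since `x + x = 0`. Otherwise the multiset has `k ≥ |S| - 2` distinct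
elements, whose `k (k - 1)` ordered pairs of distinct elements have nonzero sums. Once
`k (k - 1) > 2 (2^d - 1)`, some nonzero value is the sum of three ordered pairs, hence of two
different unordered pairs `{a, b}` and `{c, e}`; then `a, b, c, e` are distinct and
`a + b + c + e = 0`. The bound `|S| ≥ √(2^(d+1) - 7/4) + 7/2` guarantees
`(|S| - 2)(|S| - 3) > 2^(d+1) - 2`.
-/

open Multiset

def HasZeroSumSubmultiset {G : Type*} [AddCommMonoid G] (r : ℕ) (S : Multiset G) : Prop :=
  ∃ T ≤ S, card T = r ∧ T.sum = 0

section

variable {G : Type*} [AddCommGroup G]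

theorem hasZeroSumSubmultiset_four_of_four_le_count [DecidableEq G] (hG : ∀ x : G, x + x = 0)
    {S : Multiset G} {a : G} (ha : 4 ≤ count a S) : HasZeroSumSubmultiset 4 S := by
  refine ⟨replicate 4 a, le_count_iff_replicate_le.1 ha, card_replicate 4 a, ?_⟩
  rw [sum_replicate, show (4 : ℕ) = 2 + 2 from rfl, add_nsmul, two_nsmul, hG]

theorem hasZeroSumSubmultiset_four_of_two_le_count [DecidableEq G] (hG : ∀ x : G, x + x = 0)
    {S : Multiset G} {a b : G} (hab : a ≠ b) (ha : 2 ≤ count a S) (hb : 2 ≤ count b S) :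
    HasZeroSumSubmultiset 4 S := by
  refine ⟨replicate 2 a + replicate 2 b, ?_, by simp, ?_⟩
  · rw [le_iff_count]
    intro x
    rw [count_add, count_replicate, count_replicate]
    split_ifs with hax hbx hbx
    · exact absurd (hax.trans hbx.symm) hab
    all_goals subst_vars; omega
  · rw [sum_add, sum_replicate, sum_replicate, two_nsmul, two_nsmul, hG, hG, add_zero]

theorem hasZeroSumSubmultiset_four_of_nodup (hG : ∀ x : G, x + x = 0) {S : Multiset G}
    {a b c e : G} (hT : ({a, b, c, e} : Multiset G).Nodup)
    (hS : ∀ x ∈ ({a, b, c, e} : Multiset G), x ∈ S)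
    (h : a + b = c + e) : HasZeroSumSubmultiset 4 S := by
  refine ⟨{a, b, c, e}, (le_iff_subset hT).2 hS, rfl, ?_⟩
  simp only [insert_eq_cons, sum_cons, sum_singleton]
  rw [← add_assoc, ← add_assoc, h, add_assoc, hG]

end

theorem nodup_of_add_eq_add {G : Type*} [AddCancelCommMonoid G] {a b c e : G} (hab : a ≠ b)
    (hce : c ≠ e) (h : a + b = c + e) (h₁ : (c, e) ≠ (a, b)) (h₂ : (c, e) ≠ (b, a)) :
    ({a, b, c, e} : Multiset G).Nodup := by
  have hac : a ≠ c := by rintro rfl; exact h₁ (by rw [add_left_cancel h.symm])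
  have hae : a ≠ e := by
    rintro rfl; exact h₂ (by rw [add_left_cancel (h.trans (add_comm c a))])
  have hbc : b ≠ c := by
    rintro rfl; exact h₂ (by rw [add_right_cancel (h.trans (add_comm b e))])
  have hbe : b ≠ e := by rintro rfl; exact h₁ (by rw [add_right_cancel h])
  simp [hab, hac, hae, hbc, hbe, hce]

theorem Multiset.card_le_card_toFinset_add_two {α : Type*} [DecidableEq α] {S : Multiset α}
    (h₃ : ∀ a, count a S ≤ 3) (h₂ : ∀ a b, a ≠ b → 2 ≤ count a S → count b S ≤ 1) :
    card S ≤ S.toFinset.card + 2 := by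
  rw [← toFinset_sum_count_eq]
  by_cases hrep : ∃ a ∈ S.toFinset, 2 ≤ count a S
  · obtain ⟨a, haS, ha⟩ := hrep
    rw [← Finset.add_sum_erase _ _ haS, ← Finset.card_erase_add_one haS]
    have hrest : ∑ x ∈ S.toFinset.erase a, count x S ≤ (S.toFinset.erase a).card := by
      simpa using Finset.sum_le_card_nsmul _ _ 1
        fun x hx => h₂ a x (Finset.ne_of_mem_erase hx).symm ha
    have := h₃ a
    omega
  · push Not at hrep
    calc ∑ x ∈ S.toFinset, count x S ≤ ∑ _x ∈ S.toFinset, 1 :=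
          Finset.sum_le_sum fun x hx => Nat.le_of_lt_succ (hrep x hx)
      _ ≤ S.toFinset.card + 2 := by simp

section Pigeonhole

variable {G : Type*} [AddCommGroup G] [Fintype G] [DecidableEq G]

theorem Finset.exists_nodup_add_eq_add (hG : ∀ x : G, x + x = 0) {F : Finset G}
    (hF : 2 * (Fintype.card G - 1) < F.card * (F.card - 1)) :
    ∃ a b c e : G, ({a, b, c, e} : Multiset G).Nodup ∧
      (∀ x ∈ ({a, b, c, e} : Multiset G), x ∈ F) ∧ a + b = c + e := by
  have hmaps : ∀ p ∈ F.offDiag, p.1 + p.2 ∈ (Finset.univ.erase 0 : Finset G) := by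
    rintro ⟨x, y⟩ hp
    refine Finset.mem_erase.2 ⟨fun h => (Finset.mem_offDiag.1 hp).2.2 ?_, Finset.mem_univ _⟩
    rw [← add_right_cancel_iff (a := y), h, hG]
  have hcard : (Finset.univ.erase (0 : G)).card * 2 < F.offDiag.card := by
    rw [Finset.card_erase_of_mem (Finset.mem_univ _), Finset.card_univ, Finset.offDiag_card,
      ← Nat.mul_sub_one, mul_comm]
    exact hF
  obtain ⟨y, -, hy⟩ := Finset.exists_lt_card_fiber_of_mul_lt_card_of_maps_to hmaps hcard
  obtain ⟨⟨a, b⟩, hp, q, hq, r, hr, hpq, hpr, hqr⟩ := Finset.two_lt_card.1 hy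
  simp only [Finset.mem_filter, Finset.mem_offDiag] at hp hq hr
  -- `q` and `r` cannot both be the swap of `p`.
  obtain ⟨⟨c, e⟩, ⟨⟨hc, he, hce⟩, hsum⟩, h₁, h₂⟩ :
      ∃ s : G × G, ((s.1 ∈ F ∧ s.2 ∈ F ∧ s.1 ≠ s.2) ∧ s.1 + s.2 = y) ∧ s ≠ (a, b) ∧ s ≠ (b, a) := by
    by_cases hqs : q = (b, a)
    · exact ⟨r, hr, Ne.symm hpr, fun h => hqr (hqs.trans h.symm)⟩
    · exact ⟨q, hq, Ne.symm hpq, hqs⟩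
  obtain ⟨⟨ha, hb, hab⟩, hpsum⟩ := hp
  have h : a + b = c + e := hpsum.trans hsum.symm
  exact ⟨a, b, c, e, nodup_of_add_eq_add hab hce h h₁ h₂, by simp [ha, hb, hc, he], h⟩

theorem exists_hasZeroSumSubmultiset_four (hG : ∀ x : G, x + x = 0) {S : Multiset G}
    (hS : 2 * (Fintype.card G - 1) < (card S - 2) * (card S - 3)) :
    HasZeroSumSubmultiset 4 S := by
  by_cases h₄ : ∃ a, 4 ≤ count a S
  · obtain ⟨a, ha⟩ := h₄
    exact hasZeroSumSubmultiset_four_of_four_le_count hG ha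
  by_cases h₂ : ∃ a b, a ≠ b ∧ 2 ≤ count a S ∧ 2 ≤ count b S
  · obtain ⟨a, b, hab, ha, hb⟩ := h₂
    exact hasZeroSumSubmultiset_four_of_two_le_count hG hab ha hb
  push Not at h₄ h₂
  have hk : card S ≤ S.toFinset.card + 2 :=
    card_le_card_toFinset_add_two (fun a => Nat.le_of_lt_succ (h₄ a))
      (fun a b hab ha => Nat.le_of_lt_succ (h₂ a b hab ha))
  obtain ⟨a, b, c, e, hT, hTF, h⟩ := Finset.exists_nodup_add_eq_add hG (F := S.toFinset)
    (hS.trans_le (Nat.mul_le_mul (by omega) (by omega)))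
  exact hasZeroSumSubmultiset_four_of_nodup hG hT (fun x hx => mem_toFinset.1 (hTF x hx)) h

end Pigeonhole

theorem two_mul_two_pow_sub_one_lt {d n : ℕ} (hn : √((2 : ℝ) ^ (d + 1) - 7 / 4) + 7 / 2 ≤ n) :
    2 * (2 ^ d - 1) < (n - 2) * (n - 3) := by
  set s := √((2 : ℝ) ^ (d + 1) - 7 / 4)
  have hs : 0 ≤ s := Real.sqrt_nonneg _
  have hsq : s ^ 2 = 2 ^ (d + 1) - 7 / 4 :=
    Real.sq_sqrt (by linarith [one_le_pow₀ (M₀ := ℝ) one_le_two (n := d), pow_succ (2 : ℝ) d])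
  have hn3 : 3 ≤ n := by exact_mod_cast (by linarith : (3 : ℝ) ≤ n)
  rw [← Nat.cast_lt (α := ℝ)]
  push_cast [Nat.one_le_two_pow, hn3, show 2 ≤ n by omega]
  -- `(n - 2)(n - 3) ≥ (s + 3/2)(s + 1/2) = 2^(d+1) - 1 + 2 s`
  nlinarith [pow_succ (2 : ℝ) d]

theorem egz_four_upper_bound_general (d : ℕ) :
    ∀ S : Multiset (Fin d → ZMod 2),
      Real.sqrt ((2 : ℝ) ^ (d + 1) - 7 / 4) + 7 / 2 ≤ (Multiset.card S : ℝ) →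
      ∃ T ≤ S, Multiset.card T = 4 ∧ T.sum = 0 := by
  intro S hS
  have hG : ∀ x : Fin d → ZMod 2, x + x = 0 := fun x =>
    funext fun i => CharTwo.add_self_eq_zero (x i)
  refine exists_hasZeroSumSubmultiset_four hG ?_
  simpa using two_mul_two_pow_sub_one_lt hS

/-- For every `d ≥ 1`, `s₄(ℤ₂^d) ≤ √(2^(d+1) − 7/4) + 7/2`: every multiset of
elements of `ℤ₂^d` whose size is at least `√(2^(d+1) − 7/4) + 7/2` contains a
sub-multiset of size `4` whose elements sum to zero. -/
theorem egz_four_upper_bound (d : ℕ) (hd : 1 ≤ d) :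
    ∀ S : Multiset (Fin d → ZMod 2),
      Real.sqrt ((2 : ℝ) ^ (d + 1) - 7 / 4) + 7 / 2 ≤ (Multiset.card S : ℝ) →
      ∃ T ≤ S, Multiset.card T = 4 ∧ T.sum = 0 :=
  egz_four_upper_bound_general d
end

section
/- For every d ≥ 1, s_4(Z_2^d) = β(Z_2^d) + 3. -/
section Aux

variable {d : ℕ}

local notation "G" => (Fin d → ZMod 2)

lemma egz_add_self (x : G) : x + x = 0 := by
  funext i
  exact CharTwo.add_self_eq_zero (x i)

lemma egz_bdd : BddAbove {n | ∃ A : Finset G, IsSidonSet (A : Set G) ∧ A.card = n} := by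
  refine ⟨Fintype.card G, ?_⟩
  rintro n ⟨A, -, rfl⟩
  exact A.card_le_univ

lemma egz_card_le_sidon (A : Finset G) (h : IsSidonSet (A : Set G)) :
    A.card ≤ sidonNumber G :=
  le_csSup egz_bdd ⟨A, h, rfl⟩

lemma egz_exists_max : ∃ A : Finset G, IsSidonSet (A : Set G) ∧ A.card = sidonNumber G :=
  Nat.sSup_mem (s := {n | ∃ A : Finset G, IsSidonSet (A : Set G) ∧ A.card = n})
    ⟨0, ∅, by simp [IsSidonSet], by simp⟩ egz_bdd

lemma egz_sidon_pos : 1 ≤ sidonNumber G := by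
  have : ({0} : Finset G).card ≤ sidonNumber G := by
    apply egz_card_le_sidon
    intro a ha b hb c hc e he hab _ _
    simp only [Finset.coe_singleton, Set.mem_singleton_iff] at ha hb
    exact absurd (ha.trans hb.symm) hab
  simpa using this

/-- Four distinct elements of a Sidon set cannot sum to zero. -/
lemma egz_sidon_no_four {A : Set G} (h : IsSidonSet A) {a b c e : G}
    (ha : a ∈ A) (hb : b ∈ A) (hc : c ∈ A) (he : e ∈ A)
    (hab : a ≠ b) (hac : a ≠ c) (hae : a ≠ e) (_hbc : b ≠ c) (_hbe : b ≠ e) (hce : c ≠ e)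
    (hsum : a + b + c + e = 0) : False := by
  have hadd : a + b = c + e := by
    have h1 : (a + b) + (c + e) = 0 := by rw [← hsum]; abel
    have h2 : (c + e) + (c + e) = 0 := egz_add_self _
    exact add_right_cancel (h1.trans h2.symm)
  have hset := h a ha b hb c hc e he hab hce hadd
  have : a ∈ ({c, e} : Set G) := hset ▸ Set.mem_insert a {b}
  rcases this with h' | h'
  · exact hac h'
  · exact hae h'

/-- A nodup multiset of card 4 with elements in a Sidon set can't sum to zero. -/
lemma egz_nodup_four {A : Set G} (h : IsSidonSet A) {T : Multiset G}
    (hnd : T.Nodup) (hsub : ∀ x ∈ T, x ∈ A) (hcard : Multiset.card T = 4)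
    (hsum : T.sum = 0) : False := by
  obtain ⟨a, T', rfl⟩ : ∃ a T', T = a ::ₘ T' := by
    rcases T.exists_mem_of_ne_zero (by rintro rfl; simp at hcard) with ⟨a, ha⟩
    exact ⟨a, _, (Multiset.cons_erase ha).symm⟩
  have hT' : Multiset.card T' = 3 := by simpa using hcard
  obtain ⟨b, c, e, rfl⟩ := Multiset.card_eq_three.mp hT'
  simp only [Multiset.insert_eq_cons, Multiset.nodup_cons, Multiset.mem_cons,
    Multiset.mem_singleton, Multiset.nodup_singleton, and_true] at hnd
  push_neg at hnd
  obtain ⟨⟨hab, hac, hae⟩, ⟨hbc, hbe⟩, hce⟩ := hnd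
  have hsum' : a + b + c + e = 0 := by
    simp only [Multiset.insert_eq_cons, Multiset.sum_cons, Multiset.sum_singleton] at hsum
    rw [← hsum]; abel
  exact egz_sidon_no_four h (hsub a (by simp)) (hsub b (by simp)) (hsub c (by simp))
    (hsub e (by simp)) hab hac hae hbc hbe hce hsum'

/-- The building-block multiset `x0 ::ₘ x0 ::ₘ A.val` has no zero-sum sub-multiset of
size 4, when `A` is Sidon and `x0 ∈ A`. -/
lemma egz_M_no_zero_sum (A : Finset G) (hA : IsSidonSet (A : Set G)) (x0 : G)
    (hx0 : x0 ∈ A) (T : Multiset G) (hTM : T ≤ (x0 ::ₘ x0 ::ₘ A.val : Multiset G))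
    (hT4 : Multiset.card T = 4) (hTsum : T.sum = 0) : False := by
  classical
  set M : Multiset G := x0 ::ₘ x0 ::ₘ A.val with hM
  have hcount := fun z => Multiset.le_iff_count.mp hTM z
  have hcA : ∀ z, Multiset.count z A.val ≤ 1 :=
    Multiset.nodup_iff_count_le_one.mp A.nodup
  have hcx0 : Multiset.count x0 T ≤ 3 := by
    have := hcount x0
    have h1 : Multiset.count x0 A.val = 1 := Multiset.count_eq_one_of_mem A.nodup hx0
    simp only [hM, Multiset.count_cons_self, h1] at this
    omega
  have hc2 : ∀ z, z ≠ x0 → Multiset.count z T ≤ 1 := by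
    intro z hz
    have := hcount z
    simp only [hM, Multiset.count_cons_of_ne hz] at this
    exact this.trans (hcA z)
  have hmem : ∀ z ∈ T, z ∈ A := by
    intro z hzT
    have : z ∈ M := Multiset.mem_of_le hTM hzT
    simp only [hM, Multiset.mem_cons, Multiset.mem_coe] at this
    rcases this with rfl | rfl | h
    · exact hx0
    · exact hx0
    · exact h
  -- split T into copies of x0 and the rest
  set R : Multiset G := T.filter (· ≠ x0) with hR
  set n : ℕ := Multiset.count x0 T with hn
  have hsplit : Multiset.replicate n x0 + R = T := by
    have h1 : T.filter (· = x0) = Multiset.replicate n x0 := by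
      rw [hn, ← Multiset.filter_eq']
    rw [← h1, hR]
    have := Multiset.filter_add_not (· = x0) T
    simpa using this
  have hRx0 : ∀ z ∈ R, z ≠ x0 := by
    intro z hz
    rw [hR, Multiset.mem_filter] at hz
    exact hz.2
  have hRnd : R.Nodup := by
    rw [Multiset.nodup_iff_count_le_one]
    intro z
    by_cases hz : z = x0
    · subst hz
      have : Multiset.count z R = 0 := by
        simp [hR, Multiset.count_filter]
      omega
    · exact (Multiset.count_le_of_le z (Multiset.filter_le _ T)).trans (hc2 z hz)
  have hRcard : Multiset.card R = 4 - n := by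
    have := congrArg Multiset.card hsplit
    simp only [Multiset.card_add, Multiset.card_replicate, hT4] at this
    omega
  have hRmem : ∀ z ∈ R, z ∈ A := fun z hz => hmem z (Multiset.mem_of_le (Multiset.filter_le _ T) hz)
  have hsumT : (Multiset.replicate n x0).sum + R.sum = 0 := by
    rw [← Multiset.sum_add, hsplit, hTsum]
  interval_cases n
  · -- n = 0 : T is nodup
    have hTnd : T.Nodup := by
      rw [Multiset.nodup_iff_count_le_one]
      intro z
      by_cases hz : z = x0
      · subst hz; omega
      · exact hc2 z hz
    exact egz_nodup_four hA hTnd (fun x hx => hmem x hx) hT4 hTsum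
  · -- n = 1 : T is nodup
    have hTnd : T.Nodup := by
      rw [Multiset.nodup_iff_count_le_one]
      intro z
      by_cases hz : z = x0
      · subst hz; omega
      · exact hc2 z hz
    exact egz_nodup_four hA hTnd (fun x hx => hmem x hx) hT4 hTsum
  · -- n = 2 : R = {y, z} with y + z = 0
    obtain ⟨y, z, hyz⟩ := Multiset.card_eq_two.mp (by omega : Multiset.card R = 2)
    have hyne : y ≠ z := by
      have := hRnd
      rw [hyz] at this
      simp only [Multiset.insert_eq_cons, Multiset.nodup_cons, Multiset.mem_singleton] at this
      exact this.1
    have hsum2 : y + z = 0 := by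
      rw [hyz] at hsumT
      simp only [Multiset.sum_replicate, Multiset.insert_eq_cons, Multiset.sum_cons,
        Multiset.sum_singleton] at hsumT
      rw [two_smul, egz_add_self, zero_add] at hsumT
      exact hsumT
    exact hyne (add_left_cancel ((egz_add_self y).trans hsum2.symm))
  · -- n = 3 : R = {y} with x0 + y = 0
    obtain ⟨y, hy⟩ := Multiset.card_eq_one.mp (by omega : Multiset.card R = 1)
    have hyne : y ≠ x0 := hRx0 y (by rw [hy]; simp)
    have hsum3 : x0 + y = 0 := by
      rw [hy] at hsumT
      simp only [Multiset.sum_replicate, Multiset.sum_singleton] at hsumT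
      have h3 : (3 : ℕ) • x0 = x0 := by
        rw [show (3 : ℕ) = 2 + 1 from rfl, add_nsmul, two_smul, egz_add_self, one_nsmul,
          zero_add]
      rw [h3] at hsumT
      exact hsumT
    exact hyne (add_left_cancel ((hsum3).trans (egz_add_self x0).symm))

end Aux

/-- For every `d ≥ 1`, `s₄(ℤ₂^d) = β(ℤ₂^d) + 3`: the smallest `s` such that every
multiset of `s` elements of `ℤ₂^d` has a zero-sum sub-multiset of size `4` is
exactly `β(ℤ₂^d) + 3`. -/
theorem egz_four_eq_sidon_add_three (d : ℕ) (hd : 1 ≤ d) :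
    IsLeast {s : ℕ | ∀ S : Multiset (Fin d → ZMod 2), Multiset.card S = s →
        ∃ T ≤ S, Multiset.card T = 4 ∧ T.sum = 0}
      (sidonNumber (Fin d → ZMod 2) + 3) := by
  classical
  constructor
  · -- membership: every multiset of size β + 3 has a zero-sum sub-multiset of size 4
    intro S hcard
    by_contra hno
    push_neg at hno
    -- no element has multiplicity ≥ 4
    have hcount3 : ∀ x, S.count x ≤ 3 := by
      intro x
      by_contra hx
      push_neg at hx
      have hle : Multiset.replicate 4 x ≤ S := Multiset.le_count_iff_replicate_le.mp hx
      refine hno _ hle (by simp) ?_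
      rw [Multiset.sum_replicate, show (4 : ℕ) = 2 * 2 from rfl, mul_smul, two_smul,
        two_smul, egz_add_self]
    -- no two distinct elements both have multiplicity ≥ 2
    have hone : ∀ x y : (Fin d → ZMod 2), x ≠ y → 2 ≤ S.count x → 2 ≤ S.count y → False := by
      intro x y hxy hx hy
      have hle : (x ::ₘ x ::ₘ y ::ₘ {y} : Multiset (Fin d → ZMod 2)) ≤ S := by
        rw [Multiset.le_iff_count]
        intro z
        by_cases hzx : z = x
        · subst hzx
          simp only [Multiset.insert_eq_cons, Multiset.count_cons, Multiset.count_singleton]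
          simp [hxy]
          omega
        · by_cases hzy : z = y
          · subst hzy
            simp only [Multiset.insert_eq_cons, Multiset.count_cons, Multiset.count_singleton]
            simp [hzx]
            omega
          · simp only [Multiset.insert_eq_cons, Multiset.count_cons, Multiset.count_singleton]
            simp [hzx, hzy]
      refine hno _ hle (by simp) ?_
      simp only [Multiset.insert_eq_cons, Multiset.sum_cons, Multiset.sum_singleton]
      rw [egz_add_self y, add_zero, egz_add_self x]
    -- the support of S is a Sidon set
    have hSidon : IsSidonSet (S.toFinset : Set (Fin d → ZMod 2)) := by
      intro a ha b hb c hc e he hab hce hadd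
      simp only [Finset.coe_sort_coe, Finset.mem_coe, Multiset.mem_toFinset] at ha hb hc he
      by_cases hac : a = c
      · subst hac
        rw [add_left_cancel hadd]
      by_cases hae : a = e
      · subst hae
        have hbc : b = c := by
          have : a + b = a + c := by rw [hadd, add_comm]
          exact add_left_cancel this
        rw [hbc, Set.pair_comm]
      exfalso
      have hbc : b ≠ c := by
        rintro rfl
        have : b + a = b + e := by rw [add_comm, hadd]
        exact hae (add_left_cancel this)
      have hbe : b ≠ e := by
        rintro rfl
        have : a + b = c + b := by rw [hadd, add_comm]
        exact hac (add_right_cancel this)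
      -- T = {a, b, c, e} is a nodup sub-multiset of S
      have hnd : ({a, b, c, e} : Multiset (Fin d → ZMod 2)).Nodup := by
        simp only [Multiset.insert_eq_cons, Multiset.nodup_cons, Multiset.mem_cons,
          Multiset.mem_singleton, Multiset.nodup_singleton, and_true]
        push_neg
        exact ⟨⟨hab, hac, hae⟩, ⟨hbc, hbe⟩, hce⟩
      have hle : ({a, b, c, e} : Multiset (Fin d → ZMod 2)) ≤ S := by
        rw [Multiset.le_iff_subset hnd]
        intro z hz
        simp only [Multiset.insert_eq_cons, Multiset.mem_cons, Multiset.mem_singleton] at hz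
        rcases hz with rfl | rfl | rfl | rfl <;> assumption
      refine hno _ hle (by simp) ?_
      simp only [Multiset.insert_eq_cons, Multiset.sum_cons, Multiset.sum_singleton]
      have : a + (b + (c + e)) = (a + b) + (c + e) := by abel
      rw [this, hadd, egz_add_self]
    have hA : S.toFinset.card ≤ sidonNumber (Fin d → ZMod 2) :=
      egz_card_le_sidon _ hSidon
    have key : Multiset.card S ≤ S.toFinset.card + 2 := by
      by_cases hrep : ∃ x, 2 ≤ S.count x
      · obtain ⟨x0, hx0⟩ := hrep
        calc Multiset.card S = ∑ x ∈ S.toFinset, S.count x :=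
              (Multiset.toFinset_sum_count_eq S).symm
          _ ≤ ∑ x ∈ S.toFinset, (1 + if x = x0 then 2 else 0) := by
              refine Finset.sum_le_sum fun x _ => ?_
              by_cases hxx0 : x = x0
              · subst hxx0
                simp only [if_pos rfl]
                exact hcount3 x
              · simp only [if_neg hxx0, add_zero]
                by_contra hx
                push_neg at hx
                exact hone x x0 hxx0 (by omega) hx0
          _ = S.toFinset.card + ∑ x ∈ S.toFinset, (if x = x0 then 2 else 0) := by
              rw [Finset.sum_add_distrib]; simp
          _ ≤ S.toFinset.card + 2 := by
              rw [Finset.sum_ite_eq' S.toFinset x0 (fun _ => 2)]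
              split <;> omega
      · push_neg at hrep
        calc Multiset.card S = ∑ x ∈ S.toFinset, S.count x :=
              (Multiset.toFinset_sum_count_eq S).symm
          _ ≤ ∑ x ∈ S.toFinset, 1 := Finset.sum_le_sum fun x _ => by
              have := hrep x; omega
          _ = S.toFinset.card := by simp
          _ ≤ S.toFinset.card + 2 := by omega
    omega
  · -- lower bound
    intro s hs
    by_contra hlt
    push_neg at hlt
    obtain ⟨A, hA, hAcard⟩ := egz_exists_max (d := d)
    have hApos : 0 < A.card := by rw [hAcard]; exact egz_sidon_pos (d := d)
    obtain ⟨x0, hx0⟩ := Finset.card_pos.mp hApos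
    set M : Multiset (Fin d → ZMod 2) := x0 ::ₘ x0 ::ₘ A.val with hM
    have hMcard : Multiset.card M = A.card + 2 := by
      rw [hM, Finset.card_def]
      simp [Multiset.card_cons]
    have hsle : s ≤ Multiset.card M := by omega
    -- extract a sub-multiset of M of card s
    obtain ⟨T', hT'le, hT'card⟩ : ∃ T' ≤ M, Multiset.card T' = s := by
      refine ⟨(M.toList.take s : List (Fin d → ZMod 2)), ?_, ?_⟩
      · have h1 : (↑(M.toList.take s) : Multiset (Fin d → ZMod 2)) ≤ ↑M.toList :=
          (M.toList.take_sublist s).subperm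
        rwa [Multiset.coe_toList] at h1
      · simp only [Multiset.coe_card, List.length_take, Multiset.length_toList]
        omega
    obtain ⟨T, hTle, hT4, hTsum⟩ := hs T' hT'card
    exact egz_M_no_zero_sum A hA x0 hx0 T (hTle.trans hT'le) hT4 hTsum
end

section
/- For each fixed m ≥ 2 there exists a constant C > 0 such that for all d ≥ 1, β_{2m}(Z_2^d) ≤ C · 2^{d/m} + C. In other words, β_{2m}(Z_2^d) = O(2^{d/m}) as d → ∞. -/
open Finset Function

section ZeroSumTuples

variable {G : Type*} [AddCommGroup G] [DecidableEq G] {A : Finset G} {r k : ℕ}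

def zeroSumTuples (A : Finset G) (r : ℕ) : Finset (Fin r → G) :=
  {f ∈ Fintype.piFinset fun _ ↦ A | ∑ i, f i = 0}

lemma mem_zeroSumTuples {f : Fin r → G} :
    f ∈ zeroSumTuples A r ↔ (∀ i, f i ∈ A) ∧ ∑ i, f i = 0 := by
  simp [zeroSumTuples]

lemma IsZeroFreeSet.not_injective (hA : IsZeroFreeSet r A) {f : Fin r → G}
    (hf : f ∈ zeroSumTuples A r) : ¬ Injective f := by
  intro hinj
  rw [mem_zeroSumTuples] at hf
  refine hA (univ.image f) (image_subset_iff.2 fun i _ ↦ hf.1 i) ?_ ?_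
  · rw [card_image_of_injective _ hinj, card_univ, Fintype.card_fin]
  · rw [sum_image fun _ _ _ _ h ↦ hinj h, hf.2]

lemma IsZeroFreeSet.card_zeroSumTuples_le (hA : IsZeroFreeSet (k + 2) A)
    (hG : ∀ x : G, x + x = 0) :
    #(zeroSumTuples A (k + 2)) ≤ (k + 2) * (k + 1) * #A * #(zeroSumTuples A k) := by
  let insertTwice : (Fin (k + 2) × Fin (k + 1)) × G × (Fin k → G) → Fin (k + 2) → G :=
    fun ⟨⟨i, j⟩, a, g⟩ ↦ Fin.insertNth i a (Fin.insertNth j a g)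
  have hcover : zeroSumTuples A (k + 2) ⊆
      (univ ×ˢ A ×ˢ zeroSumTuples A k).image insertTwice := by
    intro f hf
    obtain ⟨i, j', hij', hfij'⟩ : ∃ i j', i ≠ j' ∧ f i = f j' := by
      simpa [Injective, and_comm] using hA.not_injective hf
    obtain ⟨j, rfl⟩ := Fin.exists_succAbove_eq hij'.symm
    obtain ⟨hfA, hfsum⟩ := mem_zeroSumTuples.1 hf
    refine mem_image.2 ⟨⟨⟨i, j⟩, f i, j.removeNth (i.removeNth f)⟩, ?_, ?_⟩
    · refine mem_product.2 ⟨mem_univ _, mem_product.2 ⟨hfA i, ?_⟩⟩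
      refine mem_zeroSumTuples.2 ⟨fun _ ↦ hfA _, ?_⟩
      rw [Fin.sum_univ_succAbove f i, Fin.sum_univ_succAbove _ j] at hfsum
      simpa [Fin.removeNth_apply, ← hfij', ← add_assoc, hG] using hfsum
    · have hj : i.removeNth f j = f i := hfij'.symm
      simp only [insertTwice]
      nth_rw 2 [← hj]
      rw [Fin.insertNth_self_removeNth, Fin.insertNth_self_removeNth]
  calc #(zeroSumTuples A (k + 2))
      ≤ #((univ ×ˢ A ×ˢ zeroSumTuples A k).image insertTwice) := card_le_card hcover
    _ ≤ #(univ ×ˢ A ×ˢ zeroSumTuples A k) := card_image_le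
    _ = (k + 2) * (k + 1) * #A * #(zeroSumTuples A k) := by
      simp [card_product, mul_assoc]

end ZeroSumTuples

section Walsh

variable {ι : Type*} [Fintype ι]

def walsh : (ι → ZMod 2) →+ AddChar (ι → ZMod 2) ℤ where
  toFun x := (AddChar.zmodChar 2 (by norm_num : (-1 : ℤ) ^ 2 = 1)).compAddMonoidHom
    (AddMonoidHom.mk' (x ⬝ᵥ ·) (dotProduct_add x))
  map_zero' := by ext; simp
  map_add' x x' := by ext; simp [add_dotProduct, AddChar.map_add_eq_mul]

lemma walsh_apply (x y : ι → ZMod 2) : walsh x y = (-1) ^ (x ⬝ᵥ y).val := rfl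

variable [DecidableEq ι]

lemma walsh_eq_zero_iff {x : ι → ZMod 2} : walsh x = 0 ↔ x = 0 := by
  refine ⟨fun h ↦ funext fun i ↦ ?_, fun h ↦ h ▸ map_zero walsh⟩
  have hi := DFunLike.congr_fun h (Pi.single i 1)
  rw [walsh_apply, AddChar.zero_apply, dotProduct_single, mul_one] at hi
  have hsign : ∀ t : ZMod 2, (-1 : ℤ) ^ t.val = 1 → t = 0 := by decide
  exact hsign _ hi

lemma sum_walsh_apply (x : ι → ZMod 2) :
    ∑ y, walsh x y = if x = 0 then 2 ^ Fintype.card ι else 0 := by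
  simp [AddChar.sum_eq_ite, walsh_eq_zero_iff]

lemma sum_sum_walsh_pow (A : Finset (ι → ZMod 2)) (r : ℕ) :
    ∑ y, (∑ a ∈ A, walsh a y) ^ r = 2 ^ Fintype.card ι * #(zeroSumTuples A r) := by
  calc ∑ y, (∑ a ∈ A, walsh a y) ^ r
      = ∑ y, ∑ f ∈ Fintype.piFinset fun _ : Fin r ↦ A, walsh (∑ i, f i) y := by
        simp_rw [← Fin.prod_const, prod_univ_sum, map_sum, AddChar.sum_apply]
    _ = ∑ f ∈ Fintype.piFinset fun _ : Fin r ↦ A,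
          if ∑ i, f i = 0 then 2 ^ Fintype.card ι else 0 := by
        rw [sum_comm]; simp_rw [sum_walsh_apply]
    _ = 2 ^ Fintype.card ι * #(zeroSumTuples A r) := by
        rw [← sum_filter, sum_const, nsmul_eq_mul, mul_comm, zeroSumTuples]

end Walsh

lemma sum_pow_sq_le_mul {ι R : Type*} [CommRing R] [LinearOrder R] [IsStrictOrderedRing R]
    (s : Finset ι) (F : ι → R) (t : ℕ) :
    (∑ i ∈ s, F i ^ (2 * (t + 1))) ^ 2 ≤
      (∑ i ∈ s, F i ^ (2 * t)) * ∑ i ∈ s, F i ^ (2 * (t + 2)) :=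
  sum_sq_le_sum_mul_sum_of_sq_le_mul s (fun i _ ↦ (even_two_mul t).pow_nonneg (F i))
    (fun i _ ↦ (even_two_mul _).pow_nonneg (F i)) fun i _ ↦ le_of_eq (by ring)

lemma le_pow_mul_of_sq_le_mul {R : Type*} [CommRing R] [LinearOrder R] [IsStrictOrderedRing R]
    {a : ℕ → R} {c : R} (hpos : ∀ t, 0 < a t) (hconv : ∀ t, a (t + 1) ^ 2 ≤ a t * a (t + 2))
    {k : ℕ} (hk : a (k + 1) ≤ c * a k) : a (k + 1) ≤ c ^ (k + 1) * a 0 := by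
  have hratio : ∀ j ≤ k, a (j + 1) ≤ c * a j := by
    refine fun j hj ↦ Nat.decreasingInduction (fun j _ ih ↦ ?_) hk hj
    refine le_of_mul_le_mul_right ?_ (hpos (j + 1))
    calc a (j + 1) * a (j + 1) = a (j + 1) ^ 2 := (sq _).symm
      _ ≤ a j * a (j + 2) := hconv j
      _ ≤ a j * (c * a (j + 1)) := mul_le_mul_of_nonneg_left ih (hpos j).le
      _ = c * a j * a (j + 1) := by ring
  have hc : 0 ≤ c := (pos_of_mul_pos_left ((hpos _).trans_le hk) (hpos k).le).le
  have hpow : ∀ j ≤ k + 1, a j ≤ c ^ j * a 0 := by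
    intro j hj
    induction j with
    | zero => simp
    | succ j ih =>
      calc a (j + 1) ≤ c * a j := hratio j (by omega)
        _ ≤ c * (c ^ j * a 0) := mul_le_mul_of_nonneg_left (ih (by omega)) hc
        _ = c ^ (j + 1) * a 0 := by ring
  exact hpow _ le_rfl

section ZeroFree

variable {ι : Type*} [Fintype ι] [DecidableEq ι] {A : Finset (ι → ZMod 2)} {m : ℕ}

theorem IsZeroFreeSet.card_pow_le (hA : IsZeroFreeSet (2 * m) A) (hm : m ≠ 0) :
    #A ^ m ≤ (2 * m * (2 * m - 1)) ^ m * 2 ^ Fintype.card ι := by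
  obtain ⟨j, rfl⟩ : ∃ j, m = j + 1 := ⟨m - 1, by omega⟩
  rcases A.eq_empty_or_nonempty with rfl | hne
  · simp
  have hK : 2 * (j + 1) * (2 * (j + 1) - 1) = (2 * j + 2) * (2 * j + 1) := by
    congr 1
  rw [hK]
  let F : (ι → ZMod 2) → ℤ := fun y ↦ ∑ a ∈ A, walsh a y
  let moment : ℕ → ℤ := fun t ↦ ∑ y, F y ^ (2 * t)
  have hmoment (t : ℕ) : moment t = 2 ^ Fintype.card ι * #(zeroSumTuples A (2 * t)) :=
    sum_sum_walsh_pow A _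
  have hlow (t : ℕ) : (#A : ℤ) ^ (2 * t) ≤ moment t := by
    have hF0 : F 0 = #A := by simp [F, walsh_apply]
    exact hF0 ▸ single_le_sum (fun y _ ↦ (even_two_mul t).pow_nonneg (F y)) (mem_univ 0)
  have hpos (t : ℕ) : 0 < moment t := (pow_pos (by simpa using hne) _).trans_le (hlow t)
  have htop : moment (j + 1) ≤ ((2 * j + 2) * (2 * j + 1) * #A : ℕ) * moment j := by
    have hG (x : ι → ZMod 2) : x + x = 0 := funext fun i ↦ CharTwo.add_self_eq_zero (x i)
    have := IsZeroFreeSet.card_zeroSumTuples_le (by rwa [mul_add_one] at hA) hG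
    rw [hmoment, hmoment, mul_add_one, mul_left_comm]
    gcongr
    exact_mod_cast this
  have hmax := le_pow_mul_of_sq_le_mul hpos (fun t ↦ sum_pow_sq_le_mul _ F t) htop
  have hmoment_zero : moment 0 = 2 ^ Fintype.card ι := by simp [moment]
  have hsq : (#A : ℤ) ^ (j + 1) * #A ^ (j + 1) ≤
      #A ^ (j + 1) * (((2 * j + 2) * (2 * j + 1) : ℕ) ^ (j + 1) * 2 ^ Fintype.card ι) :=
    calc (#A : ℤ) ^ (j + 1) * #A ^ (j + 1) = #A ^ (2 * (j + 1)) := by ring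
      _ ≤ moment (j + 1) := hlow _
      _ ≤ _ := hmax
      _ = _ := by rw [hmoment_zero, Nat.cast_mul, mul_pow]; ring
  exact_mod_cast le_of_mul_le_mul_left hsq (by positivity)

theorem IsZeroFreeSet.card_le (hA : IsZeroFreeSet (2 * m) A) (hm : m ≠ 0) :
    (#A : ℝ) ≤ (2 * m * (2 * m - 1) : ℕ) * 2 ^ ((Fintype.card ι : ℝ) / m) := by
  refine le_of_pow_le_pow_left₀ hm (by positivity) ?_
  rw [mul_pow, ← Real.rpow_natCast (2 ^ _) m, ← Real.rpow_mul zero_le_two,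
    div_mul_cancel₀ _ (Nat.cast_ne_zero.2 hm), Real.rpow_natCast]
  exact_mod_cast hA.card_pow_le hm

end ZeroFree

lemma exists_isZeroFreeSet_card_eq_zeroFreeNumber {G : Type*} [AddCommGroup G] [Fintype G]
    {r : ℕ} (hr : r ≠ 0) : ∃ A : Finset G, IsZeroFreeSet r A ∧ #A = zeroFreeNumber G r :=
  Nat.sSup_mem (s := {n | ∃ A : Finset G, IsZeroFreeSet r A ∧ #A = n})
    ⟨0, ∅, fun B hB hcard _ ↦ hr (by simpa [subset_empty.1 hB] using hcard.symm), rfl⟩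
    ⟨Fintype.card G, by rintro _ ⟨A, -, rfl⟩; exact card_le_univ A⟩

/-- For each fixed `m ≥ 2` there is a constant `C > 0` such that for all `d ≥ 1`,
`β_{2m}(ℤ₂^d) ≤ C · 2^(d/m) + C`, i.e. `β_{2m}(ℤ₂^d) = O(2^(d/m))` as `d → ∞`. -/
theorem zeroFree_upper_general (m : ℕ) (hm : 2 ≤ m) :
    ∃ C : ℝ, 0 < C ∧ ∀ d : ℕ, 1 ≤ d →
      (zeroFreeNumber (Fin d → ZMod 2) (2 * m) : ℝ) ≤
        C * (2 : ℝ) ^ ((d : ℝ) / (m : ℝ)) + C := by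
  have hm0 : m ≠ 0 := by omega
  have hC : 0 < 2 * m * (2 * m - 1) := Nat.mul_pos (by omega) (by omega)
  refine ⟨(2 * m * (2 * m - 1) : ℕ), by exact_mod_cast hC, fun d _ ↦ ?_⟩
  obtain ⟨A, hA, hcard⟩ :=
    exists_isZeroFreeSet_card_eq_zeroFreeNumber (G := Fin d → ZMod 2) (by omega : 2 * m ≠ 0)
  rw [← hcard]
  have hbound := hA.card_le hm0
  rw [Fintype.card_fin] at hbound
  linarith [(Nat.cast_pos (α := ℝ)).2 hC]
end

section
/- For all integers m ≥ 1 and k ≥ 1, the group Z_2^{mk} contains a zero-free set of rank 2m of size 2^k; that is, β_{2m}(Z_2^d) ≥ 2^{d/m} whenever d is a multiple of m. -/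
lemma vandermonde_trick {F : Type*} [Field F] {n : ℕ} (hn : 0 < n)
    (v : Fin n → F) (hv : Function.Injective v)
    (hsum : ∀ t < n, ∑ i, v i ^ t = 0) : False := by
  have hdet : (Matrix.vandermonde v).transpose.det ≠ 0 := by
    rw [Matrix.det_transpose, Matrix.det_vandermonde]
    refine Finset.prod_ne_zero_iff.2 fun i _ => Finset.prod_ne_zero_iff.2 fun j hj => ?_
    exact sub_ne_zero.2 fun h => (Finset.mem_Ioi.1 hj).ne' (hv h)
  have hmv : (Matrix.vandermonde v).transpose.mulVec (fun _ => (1 : F)) = 0 := by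
    funext t
    simp only [Matrix.mulVec, dotProduct, Matrix.transpose_apply, Matrix.vandermonde_apply,
      mul_one]
    exact hsum t t.2
  have := Matrix.eq_zero_of_mulVec_eq_zero hdet hmv
  have h1 : (1 : F) = 0 := congrFun this ⟨0, hn⟩
  exact one_ne_zero h1

lemma exists_zeroFree (m k : ℕ) (hm : 1 ≤ m) (hk : 1 ≤ k) :
    ∃ A : Finset (Fin (m * k) → ZMod 2), IsZeroFreeSet (2 * m) A ∧ A.card = 2 ^ k := by
  classical
  set F := GaloisField 2 k with hF
  haveI : Fintype F := Fintype.ofFinite F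
  have hkne : k ≠ 0 := by omega
  have hcardF : Fintype.card F = 2 ^ k := by
    have := GaloisField.card 2 k hkne
    rwa [Nat.card_eq_fintype_card] at this
  have hq : Fintype.card (ZMod 2) = 2 := by simp
  have hfr : Module.finrank (ZMod 2) F = k := by
    have h := Module.card_eq_pow_finrank (K := ZMod 2) (V := F)
    rw [hcardF, hq] at h
    exact (Nat.pow_right_injective le_rfl h).symm
  have hfr1 : Module.finrank (ZMod 2) (Fin m → F) = m * k := by
    rw [Module.finrank_pi_fintype]
    simp [hfr, Finset.sum_const]
  have hfr2 : Module.finrank (ZMod 2) (Fin (m * k) → ZMod 2) = m * k := by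
    rw [Module.finrank_pi, Fintype.card_fin]
  obtain ⟨ψ⟩ := FiniteDimensional.nonempty_linearEquiv_of_finrank_eq (hfr1.trans hfr2.symm)
  set φ : F → (Fin (m * k) → ZMod 2) := fun x => ψ (fun j => x ^ (2 * (j : ℕ) + 1)) with hφ
  have hinj : Function.Injective φ := by
    intro x y hxy
    have := ψ.injective hxy
    have := congrFun this ⟨0, hm⟩
    simpa using this
  refine ⟨Finset.image φ Finset.univ, ?_, ?_⟩
  · intro B hB hBcard hBsum
    set S : Finset F := B.preimage φ hinj.injOn with hS
    have hrange : ∀ x ∈ B, x ∈ Set.range φ := by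
      intro x hx
      obtain ⟨y, _, rfl⟩ := Finset.mem_image.1 (hB hx)
      exact ⟨y, rfl⟩
    have hScard : S.card = 2 * m := by
      rw [← hBcard]
      have := Finset.sum_preimage φ B hinj.injOn (fun _ => (1 : ℕ))
        (fun x hx hx' => absurd (hrange x hx) hx')
      simpa using this
    have hSsum : ∑ x ∈ S, φ x = 0 := by
      have := Finset.sum_preimage φ B hinj.injOn (fun x => x)
        (fun x hx hx' => absurd (hrange x hx) hx')
      exact this.trans hBsum
    have hodd : ∀ j : Fin m, ∑ x ∈ S, x ^ (2 * (j : ℕ) + 1) = 0 := by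
      have h0 : ψ (∑ x ∈ S, fun j : Fin m => x ^ (2 * (j : ℕ) + 1)) = 0 := by
        rw [map_sum]; exact hSsum
      have h1 := (LinearEquiv.map_eq_zero_iff ψ).1 h0
      intro j
      have := congrFun h1 j
      simpa using this
    have hall : ∀ t < 2 * m, ∑ x ∈ S, x ^ t = 0 := by
      intro t
      induction t using Nat.strong_induction_on with
      | _ t ih =>
        intro ht
        rcases Nat.even_or_odd t with ⟨u, hu⟩ | ⟨u, hu⟩
        · rcases Nat.eq_zero_or_pos u with rfl | hu0
          · have ht0 : t = 0 := by omega
            subst ht0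
            rw [show (fun x : F => x ^ 0) = fun _ => (1 : F) from funext fun x => pow_zero x]
            rw [Finset.sum_const, hScard, nsmul_eq_mul, mul_one]
            rw [CharP.cast_eq_zero_iff F 2 (2 * m)]
            exact ⟨m, rfl⟩
          · have hu2 : t = 2 * u := by omega
            have hut : u < t := by omega
            have hum : u < 2 * m := by omega
            have hfrob := sum_pow_char (p := 2) (s := S) (f := fun x : F => x ^ u)
            rw [hu2]
            calc ∑ x ∈ S, x ^ (2 * u) = ∑ x ∈ S, (x ^ u) ^ 2 := by
                  refine Finset.sum_congr rfl fun x _ => ?_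
                  rw [← pow_mul, mul_comm]
              _ = (∑ x ∈ S, x ^ u) ^ 2 := hfrob.symm
              _ = 0 := by rw [ih u hut hum]; exact zero_pow two_ne_zero
        · have hum : u < m := by omega
          have := hodd ⟨u, hum⟩
          rw [hu]
          simpa using this
    have e := S.equivFinOfCardEq hScard
    refine vandermonde_trick (n := 2 * m) (by omega) (fun i => ((e.symm i : S) : F)) ?_ ?_
    · intro i j hij
      exact e.symm.injective (Subtype.ext hij)
    · intro t ht
      have h1 : ∑ i : Fin (2 * m), ((e.symm i : S) : F) ^ t = ∑ x : S, (x : F) ^ t :=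
        Fintype.sum_equiv e.symm _ _ (fun i => rfl)
      rw [h1, Finset.sum_coe_sort S (fun x => x ^ t)]
      exact hall t ht
  · rw [Finset.card_image_of_injective _ hinj, Finset.card_univ, hcardF]


/-- For all `m, k ≥ 1`, the group `ℤ₂^{mk}` contains a zero-free set of rank `2m`
of size `2^k`; that is, `β_{2m}(ℤ₂^d) ≥ 2^{d/m}` whenever `d` is a multiple of `m`. -/
theorem zeroFree_lower_bound (m k : ℕ) (hm : 1 ≤ m) (hk : 1 ≤ k) :
    (∃ A : Finset (Fin (m * k) → ZMod 2), IsZeroFreeSet (2 * m) A ∧ A.card = 2 ^ k) ∧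
    2 ^ k ≤ zeroFreeNumber (Fin (m * k) → ZMod 2) (2 * m) := by
  obtain ⟨A, hA, hcard⟩ := exists_zeroFree m k hm hk
  refine ⟨⟨A, hA, hcard⟩, ?_⟩
  have hbdd : BddAbove {n | ∃ A : Finset (Fin (m * k) → ZMod 2),
      IsZeroFreeSet (2 * m) A ∧ A.card = n} := by
    refine ⟨Fintype.card (Fin (m * k) → ZMod 2), ?_⟩
    rintro n ⟨C, -, rfl⟩
    exact (Finset.card_le_univ C).trans (le_of_eq (Finset.card_univ))
  have hmem : 2 ^ k ∈ {n | ∃ A : Finset (Fin (m * k) → ZMod 2),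
      IsZeroFreeSet (2 * m) A ∧ A.card = n} := ⟨A, hA, hcard⟩
  exact le_csSup hbdd hmem
end

section
/- For all integers m ≥ 1 and k ≥ 1, s_{2m}(Z_2^{mk}) ≥ 2^k + 2m − 1. Equivalently: there exists a multiset of 2^k + 2m − 2 elements of Z_2^{mk} that contains no sub-multiset of size 2m whose elements sum to zero. -/
/-!
The construction behind the bound is the parity-check matrix of a binary BCH code. Identify
`ℤ₂^{mk}` with `𝔽^m` for `𝔽 = 𝔽_{2^k}` and send `v ∈ 𝔽ˣ` to `(v, v³, …, v^{2m-1})`. Together with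
`2m - 1` copies of `0` these `2^k - 1` vectors form the multiset. A zero-sum sub-multiset of
size `2m` contains at most `2m - 1` zeros, so it yields a nonempty set `B ⊆ 𝔽ˣ` with `|B| ≤ 2m`
whose odd power sums `∑_{v ∈ B} v^{2i+1}` vanish for `i < m`. In characteristic `2`,
`∑ v^{2l} = (∑ v^l)²`, so every power sum `∑ v^l` with `1 ≤ l ≤ 2m` vanishes. But then the
vector `(v)_{v ∈ B}` lies in the left kernel of the invertible Vandermonde matrix `(v^l)`,
which is impossible as its entries are nonzero.
-/

open Finset Matrix

section PowerSums

variable {K : Type*} [Field K]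

theorem eq_zero_of_sum_pow_succ_eq_zero {n : ℕ} {b : Fin n → K} (hb : Function.Injective b)
    (h : ∀ l : Fin n, ∑ i, b i ^ ((l : ℕ) + 1) = 0) : b = 0 := by
  refine eq_zero_of_vecMul_eq_zero (det_vandermonde_ne_zero_iff.2 hb) (funext fun l => ?_)
  simpa [vecMul, dotProduct, vandermonde_apply, pow_succ'] using h l

theorem Finset.eq_empty_of_sum_pow_eq_zero {B : Finset K} (h0 : (0 : K) ∉ B)
    (h : ∀ l, 1 ≤ l → l ≤ #B → ∑ v ∈ B, v ^ l = 0) : B = ∅ := by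
  set b : Fin #B → K := fun i => B.equivFin.symm i
  have hb : b = 0 := by
    refine eq_zero_of_sum_pow_succ_eq_zero
      (Subtype.val_injective.comp B.equivFin.symm.injective) fun l => ?_
    rw [← h (l + 1) (by omega) l.isLt, ← B.sum_coe_sort]
    exact Fintype.sum_equiv B.equivFin.symm _ _ fun _ => rfl
  rw [← not_nonempty_iff_eq_empty]
  rintro ⟨v, hv⟩
  have hv0 : v = 0 := by simpa [b] using congrFun hb (B.equivFin ⟨v, hv⟩)
  exact h0 (hv0 ▸ hv)

theorem sum_pow_eq_zero_of_sum_odd_pow_eq_zero {R : Type*} [CommSemiring R] [CharP R 2]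
    {B : Finset R} {m : ℕ}
    (h : ∀ i < m, ∑ v ∈ B, v ^ (2 * i + 1) = 0) {l : ℕ} (hl : 1 ≤ l) (hlm : l ≤ 2 * m) :
    ∑ v ∈ B, v ^ l = 0 := by
  induction l using Nat.strong_induction_on with
  | _ l ih =>
    obtain ⟨l', rfl | rfl⟩ := Nat.even_or_odd' l
    · have hsq : ∑ v ∈ B, v ^ (2 * l') = (∑ v ∈ B, v ^ l') ^ 2 := by
        simp only [sum_pow_char, ← pow_mul, mul_comm]
      rw [hsq, ih l' (by omega) (by omega) (by omega), zero_pow two_ne_zero]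
    · exact h l' (by omega)

end PowerSums

section OddPowers

variable {K : Type*} [Field K] {m : ℕ}

def oddPowers (m : ℕ) (v : K) : Fin m → K := fun i => v ^ (2 * (i : ℕ) + 1)

@[simp]
theorem oddPowers_zero : oddPowers m (0 : K) = 0 := by
  ext i
  simp [oddPowers]

theorem oddPowers_injective (hm : 0 < m) : Function.Injective (oddPowers (K := K) m) :=
  fun v w h => by simpa [oddPowers] using congrFun h ⟨0, hm⟩

theorem sum_oddPowers_ne_zero [CharP K 2] {B : Finset K} (h0 : (0 : K) ∉ B)
    (hne : B.Nonempty) (hB : #B ≤ 2 * m) : ∑ v ∈ B, oddPowers m v ≠ 0 := by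
  intro hsum
  refine hne.ne_empty (eq_empty_of_sum_pow_eq_zero h0 fun l hl hlB => ?_)
  refine sum_pow_eq_zero_of_sum_odd_pow_eq_zero (fun i hi => ?_) hl (hlB.trans hB)
  simpa [oddPowers] using congrFun hsum ⟨i, hi⟩

end OddPowers

theorem sum_ne_zero_of_le_replicate_zero_add {G : Type*} [AddCommMonoid G] [DecidableEq G]
    {X : Finset G} {r : ℕ} (hr : 0 < r) (h0 : (0 : G) ∉ X)
    (hX : ∀ Y ⊆ X, Y.Nonempty → #Y ≤ r → ∑ y ∈ Y, y ≠ 0) {T : Multiset G}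
    (hT : T ≤ Multiset.replicate (r - 1) 0 + X.val) (hcard : Multiset.card T = r) :
    T.sum ≠ 0 := by
  set T₀ := T.filter fun x => ¬x = 0
  have hT₀ : T₀ ≤ X.val := by
    have := Multiset.filter_le_filter (fun x => ¬x = 0) hT
    rwa [Multiset.filter_add, (Multiset.filter_eq_nil (s := Multiset.replicate _ _)).2
        fun _ ha => not_not.2 (Multiset.eq_of_mem_replicate ha),
      Multiset.filter_eq_self.2 fun x hx => ne_of_mem_of_not_mem hx h0, zero_add] at this
  have hsplit : T = Multiset.replicate (T.count 0) 0 + T₀ := by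
    rw [← Multiset.filter_eq', Multiset.filter_add_not]
  have hzeros : T.count 0 ≤ r - 1 := by
    simpa [h0] using Multiset.count_le_of_le 0 hT
  let Y : Finset G := ⟨T₀, Multiset.nodup_of_le hT₀ X.nodup⟩
  have hYcard : T.count 0 + #Y = r := by
    change _ + Multiset.card T₀ = r
    rw [← hcard, ← Multiset.card_replicate (T.count 0) (0 : G), ← Multiset.card_add, ← hsplit]
  have hY := hX Y (Multiset.subset_of_le hT₀) (card_pos.1 (by omega)) (by omega)
  rw [hsplit, Multiset.sum_add, Multiset.sum_replicate, smul_zero, zero_add]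
  simpa [Finset.sum, Y] using hY

theorem nonempty_linearEquiv_pi_galoisField (p : ℕ) [Fact p.Prime] (m : ℕ) {n : ℕ}
    (hn : n ≠ 0) : Nonempty ((Fin m → GaloisField p n) ≃ₗ[ZMod p] (Fin (m * n) → ZMod p)) :=
  ⟨LinearEquiv.ofFinrankEq _ _ (by
    rw [Module.finrank_pi_fintype, Module.finrank_fin_fun]
    simp [GaloisField.finrank p hn])⟩

/-- For all `m, k ≥ 1`, `s_{2m}(ℤ₂^{mk}) ≥ 2^k + 2m − 1`: there exists a multiset
of `2^k + 2m − 2` elements of `ℤ₂^{mk}` containing no sub-multiset of size `2m`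
whose elements sum to zero. -/
theorem egz_lower_bound (m k : ℕ) (hm : 1 ≤ m) (hk : 1 ≤ k) :
    ∃ S : Multiset (Fin (m * k) → ZMod 2),
      Multiset.card S = 2 ^ k + 2 * m - 2 ∧
      ∀ T ≤ S, Multiset.card T = 2 * m → T.sum ≠ 0 := by
  classical
  have : Fact (Nat.Prime 2) := ⟨Nat.prime_two⟩
  let := Fintype.ofFinite (GaloisField 2 k)
  obtain ⟨e⟩ := nonempty_linearEquiv_pi_galoisField 2 m (show k ≠ 0 by omega)
  have hg : Function.Injective (e ∘ oddPowers m) := e.injective.comp (oddPowers_injective hm)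
  set X := (univ.erase 0).image (e ∘ oddPowers m)
  have hX0 : 0 ∉ X := by
    simp only [X, mem_image, mem_erase, not_exists, not_and]
    exact fun v ⟨hv, _⟩ hgv => hv (hg (hgv.trans (by simp)))
  have hXcard : #X = 2 ^ k - 1 := by
    rw [card_image_of_injective _ hg, card_erase_of_mem (mem_univ _), card_univ,
      ← Nat.card_eq_fintype_card, GaloisField.card 2 k (by omega)]
  refine ⟨Multiset.replicate (2 * m - 1) 0 + X.val, ?_, fun T hT hcard =>
    sum_ne_zero_of_le_replicate_zero_add (by omega) hX0 ?_ hT hcard⟩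
  · have := Nat.one_le_two_pow (n := k)
    simp only [Multiset.card_add, Multiset.card_replicate, card_val, hXcard]
    omega
  · intro Y hY hne hYcard
    obtain ⟨B, hB, rfl⟩ := subset_image_iff.1 hY
    rw [card_image_of_injective _ hg] at hYcard
    rw [sum_image hg.injOn]
    simp only [Function.comp_apply, ← map_sum, map_ne_zero_iff _ e.injective]
    exact sum_oddPowers_ne_zero (fun h => (mem_erase.1 (hB h)).1 rfl) (image_nonempty.1 hne) hYcard
end

section
/- Let G be a finite abelian group and let r ≥ 2 be a multiple of exp(G). Then limsup_{n→∞} T_{r-1}(n, s_r(G), r) / (n − r + 1) ≤ 1/|G|, where T_{r-1}(n,k,r) is the minimum of Δ_{r-1}(H) over all r-graphs H on n vertices with independence number α(H) < k. -/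
/-- `Δ_l(H)`: the maximum, over `l`-element vertex subsets `A`, of the number of
edges of `H` containing `A`. -/
def maxDeg (n : ℕ) (H : Finset (Finset (Fin n))) (l : ℕ) : ℕ :=
  (Finset.univ.filter (fun A : Finset (Fin n) => A.card = l)).sup
    (fun A => (H.filter (fun e => A ⊆ e)).card)

/-- `T_l(n,k,r)`: the minimum of `Δ_l(H)` over all `r`-graphs `H` on `n` vertices
with independence number `α(H) < k`. -/
noncomputable def turanMinDeg (l n k r : ℕ) : ℕ :=
  sInf {D | ∃ H : Finset (Finset (Fin n)),
    (∀ e ∈ H, e.card = r) ∧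
    (∀ S : Finset (Fin n), (∀ e ∈ H, ¬ e ⊆ S) → S.card < k) ∧
    maxDeg n H l = D}

/-!
Colour the vertices by a map `f` to `G` whose colour classes have at most `n / |G| + 1` vertices,
and let the edges be the `r`-sets whose colours sum to zero. Since `r • g = 0` for all `g`,
pigeonhole gives `s_r(G) ≤ |G| (r - 1) + 1`, so any `s_r(G)` vertices span an edge and
`α(H) < s_r(G)`. An edge through an `(r - 1)`-set `A` is `A` plus a vertex of colour
`-∑_{x ∈ A} f x`, so the codegree is at most `n / |G| + 1 = (1 / |G| + o(1)) (n - r + 1)`.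
-/

open Filter Topology Finset

theorem Multiset.exists_le_map_eq_of_le_map {α β : Type*} {f : α → β} {s : Multiset α}
    {u : Multiset β} (h : u ≤ s.map f) : ∃ t ≤ s, t.map f = u := by
  induction s using Quot.inductionOn
  induction u using Quot.inductionOn
  obtain ⟨w, hw, hsub⟩ := h
  obtain ⟨t, ht, rfl⟩ := List.sublist_map_iff.mp hsub
  exact ⟨t, ht.subperm, Quot.sound hw⟩

theorem Multiset.exists_lt_count_of_card_mul_lt {α : Type*} [Fintype α] [DecidableEq α]
    {s : Multiset α} {k : ℕ} (h : Fintype.card α * k < Multiset.card s) :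
    ∃ a, k < s.count a := by
  have hsum : ∑ _a : α, k < ∑ a, s.count a := by
    rwa [sum_const, card_univ, smul_eq_mul, Multiset.sum_count_eq_card fun a _ => mem_univ a]
  obtain ⟨a, -, ha⟩ := exists_lt_of_sum_lt hsum
  exact ⟨a, ha⟩

theorem Fin.card_filter_mod_eq_le (n q c : ℕ) : #{i : Fin n | (i : ℕ) % q = c} ≤ n / q + 1 := by
  refine (card_le_card_of_injOn (t := range (n / q + 1)) (fun i : Fin n => (i : ℕ) / q) ?_ ?_
    ).trans_eq (card_range _)
  · intro i _
    simpa [Nat.lt_succ_iff] using Nat.div_le_div_right i.isLt.le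
  · intro i hi j hj hij
    simp only [coe_filter, Set.mem_ofPred_eq, mem_univ, true_and] at hi hj
    rw [Fin.ext_iff, ← Nat.div_add_mod i q, ← Nat.div_add_mod j q, hi, hj]
    exact congrArg (q * · + c) hij

def ForcesZeroSum (G : Type*) [AddCommMonoid G] (r s : ℕ) : Prop :=
  ∀ S : Multiset G, Multiset.card S = s → ∃ T ≤ S, Multiset.card T = r ∧ T.sum = 0

theorem forcesZeroSum_card_mul_pred_add_one {G : Type*} [AddCommMonoid G] [Fintype G] {r : ℕ}
    (hdvd : AddMonoid.exponent G ∣ r) :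
    ForcesZeroSum G r (Fintype.card G * (r - 1) + 1) := by
  classical
  intro S hS
  obtain ⟨g, hg⟩ := Multiset.exists_lt_count_of_card_mul_lt (s := S) (k := r - 1) (by omega)
  refine ⟨Multiset.replicate r g, Multiset.le_count_iff_replicate_le.mp (by omega), by simp, ?_⟩
  rw [Multiset.sum_replicate]
  exact AddMonoid.exponent_dvd_iff_forall_nsmul_eq_zero.mp hdvd g

theorem forcesZeroSum_egzConst {G : Type*} [AddCommGroup G] [Fintype G] {r : ℕ}
    (hdvd : AddMonoid.exponent G ∣ r) : ForcesZeroSum G r (egzConst G r) :=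
  Nat.sInf_mem (s := {s | ForcesZeroSum G r s}) ⟨_, forcesZeroSum_card_mul_pred_add_one hdvd⟩

theorem ForcesZeroSum.exists_subset_sum_eq_zero {G α : Type*} [AddCommMonoid G] {r s : ℕ}
    (h : ForcesZeroSum G r s) (f : α → G) {S : Finset α} (hS : s ≤ #S) :
    ∃ e ⊆ S, #e = r ∧ ∑ x ∈ e, f x = 0 := by
  obtain ⟨S', hS'S, hS'⟩ := exists_subset_card_eq hS
  obtain ⟨T, hT, hTcard, hTsum⟩ := h (S'.val.map f) (by simp [hS'])
  obtain ⟨t, ht, rfl⟩ := Multiset.exists_le_map_eq_of_le_map hT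
  refine ⟨⟨t, Multiset.nodup_of_le ht S'.nodup⟩, ?_, by simpa using hTcard, hTsum⟩
  exact (val_le_iff.mp ht).trans hS'S

section ZeroSumGraph

variable {α G : Type*} [Fintype α] [DecidableEq G]

def zeroSumGraph [AddCommMonoid G] (f : α → G) (r : ℕ) : Finset (Finset α) :=
  {e | #e = r ∧ ∑ x ∈ e, f x = 0}

theorem card_of_mem_zeroSumGraph [AddCommMonoid G] {f : α → G} {r : ℕ} {e : Finset α}
    (he : e ∈ zeroSumGraph f r) : #e = r :=
  (mem_filter.mp he).2.1

theorem card_lt_of_forall_not_subset_zeroSumGraph [AddCommMonoid G] {f : α → G} {r s : ℕ}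
    (h : ForcesZeroSum G r s) {S : Finset α} (hS : ∀ e ∈ zeroSumGraph f r, ¬ e ⊆ S) : #S < s := by
  by_contra! hs
  obtain ⟨e, heS, he, hsum⟩ := h.exists_subset_sum_eq_zero f hs
  exact hS e (mem_filter.mpr ⟨mem_univ e, he, hsum⟩) heS

theorem card_filter_superset_zeroSumGraph_le [DecidableEq α] [AddCommGroup G] (f : α → G) {r : ℕ}
    {A : Finset α} (hA : #A + 1 = r) :
    #{e ∈ zeroSumGraph f r | A ⊆ e} ≤ #{v | f v = -∑ x ∈ A, f x} := by
  refine (card_le_card (t := image (fun v => insert v A) _) fun e he => ?_).trans card_image_le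
  obtain ⟨he, hAe⟩ := mem_filter.mp he
  obtain ⟨-, hcard, hsum⟩ := mem_filter.mp he
  obtain ⟨v, hvA, rfl⟩ := exists_eq_insert_iff.mpr ⟨hAe, hA.trans hcard.symm⟩
  rw [sum_insert hvA] at hsum
  exact mem_image.mpr ⟨v, mem_filter.mpr ⟨mem_univ v, eq_neg_of_add_eq_zero_left hsum⟩, rfl⟩

end ZeroSumGraph

theorem maxDeg_zeroSumGraph_le {G : Type*} [AddCommGroup G] [DecidableEq G] {n r m : ℕ} (hr : 1 ≤ r)
    {f : Fin n → G} (hf : ∀ g, #{v | f v = g} ≤ m) : maxDeg n (zeroSumGraph f r) (r - 1) ≤ m :=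
  Finset.sup_le fun A hA =>
    (card_filter_superset_zeroSumGraph_le f (by have := (mem_filter.mp hA).2; omega)).trans (hf _)

theorem exists_fiber_card_le (n : ℕ) (β : Type*) [Fintype β] [DecidableEq β] [Nonempty β] :
    ∃ f : Fin n → β, ∀ b, #{i | f i = b} ≤ n / Fintype.card β + 1 := by
  let e := Fintype.equivFin β
  refine ⟨fun i => e.symm ⟨i % Fintype.card β, Nat.mod_lt _ Fintype.card_pos⟩, fun b => ?_⟩
  refine le_of_eq_of_le ?_ (Fin.card_filter_mod_eq_le n (Fintype.card β) (e b))
  congr 1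
  ext i
  simp [Equiv.symm_apply_eq, Fin.ext_iff]

theorem turanMinDeg_le (G : Type*) [AddCommGroup G] [Fintype G] {r : ℕ} (hr : 1 ≤ r)
    (hdvd : AddMonoid.exponent G ∣ r) (n : ℕ) :
    turanMinDeg (r - 1) n (egzConst G r) r ≤ n / Fintype.card G + 1 := by
  classical
  obtain ⟨f, hf⟩ := exists_fiber_card_le n G
  refine (Nat.sInf_le ?_).trans (maxDeg_zeroSumGraph_le hr hf)
  exact ⟨zeroSumGraph f r, fun e => card_of_mem_zeroSumGraph,
    fun S => card_lt_of_forall_not_subset_zeroSumGraph (forcesZeroSum_egzConst hdvd), rfl⟩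

theorem tendsto_mul_natCast_add_div_natCast_add (a b c : ℝ) :
    Tendsto (fun n : ℕ => (a * n + b) / (n + c)) atTop (𝓝 a) := by
  have hinv : Tendsto (fun n : ℕ => ((n : ℝ) + c)⁻¹) atTop (𝓝 0) :=
    tendsto_inv_atTop_zero.comp (tendsto_atTop_add_const_right _ c tendsto_natCast_atTop_atTop)
  have := ((tendsto_natCast_div_add_atTop c).const_mul a).add (hinv.const_mul b)
  rw [mul_one, mul_zero, add_zero] at this
  refine this.congr fun n => ?_
  rw [add_div, mul_div_assoc, div_eq_mul_inv b]

/-- If `G` is a finite abelian group and `r ≥ 2` is a multiple of `exp(G)`, then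
`limsup_{n→∞} T_{r-1}(n, s_r(G), r) / (n − r + 1) ≤ 1 / |G|`. -/
theorem codegree_turan_upper_bound (G : Type*) [AddCommGroup G] [Fintype G]
    (r : ℕ) (hr : 2 ≤ r) (hdvd : AddMonoid.exponent G ∣ r) :
    Filter.limsup
      (fun n : ℕ => (turanMinDeg (r - 1) n (egzConst G r) r : ℝ) / ((n : ℝ) - r + 1))
      Filter.atTop ≤ 1 / (Fintype.card G : ℝ) := by
  set q : ℝ := (Fintype.card G : ℝ)
  have hT (n : ℕ) : (turanMinDeg (r - 1) n (egzConst G r) r : ℝ) ≤ q⁻¹ * n + 1 :=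
    calc (turanMinDeg (r - 1) n (egzConst G r) r : ℝ)
        ≤ (n / Fintype.card G : ℕ) + 1 := by exact_mod_cast turanMinDeg_le G (by omega) hdvd n
      _ ≤ q⁻¹ * n + 1 := by grw [Nat.cast_div_le, div_eq_inv_mul]
  have hden : ∀ᶠ n : ℕ in atTop, 0 ≤ (n : ℝ) - r + 1 := by
    filter_upwards [eventually_ge_atTop r] with n hn
    linarith [(Nat.cast_le (α := ℝ)).mpr hn]
  have hlim := tendsto_mul_natCast_add_div_natCast_add q⁻¹ 1 (1 - r)
  rw [one_div, ← hlim.limsup_eq]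
  refine limsup_le_limsup ?_ (isCoboundedUnder_le_of_eventually_le _ (x := 0) ?_)
    hlim.isBoundedUnder_le
  · filter_upwards [hden] with n hn
    rw [show (n : ℝ) + (1 - r) = n - r + 1 by ring]
    gcongr
    exact hT n
  · filter_upwards [hden] with n hn
    positivity
end

section
/- Let F be a finite field of characteristic 2 and let n ≥ 1. If x_1, x_2, …, x_{2n} ∈ F satisfy Σ_{i=1}^{2n} (x_i)^r = 0 for every odd integer r with 1 ≤ r ≤ 2n−1, then there exist indices i ≠ j with x_i = x_j. -/
/-- Let `F` be a finite field of characteristic 2 and `n ≥ 1`. If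
`x₁, …, x_{2n} ∈ F` satisfy `∑ i, xᵢ^r = 0` for every odd `r` with
`1 ≤ r ≤ 2n − 1`, then two of the `xᵢ` are equal. -/
theorem power_sums_vanish_imp_repeat (F : Type*) [Field F] [Fintype F] [CharP F 2]
    (n : ℕ) (hn : 1 ≤ n) (x : Fin (2 * n) → F)
    (hx : ∀ r : ℕ, Odd r → 1 ≤ r → r ≤ 2 * n - 1 → ∑ i, (x i) ^ r = 0) :
    ∃ i j, i ≠ j ∧ x i = x j := by
  by_contra hcon
  push_neg at hcon
  have hinj : Function.Injective x := by
    intro i j h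
    by_contra hne
    exact hcon i j hne h
  -- all power sums vanish for 1 ≤ r ≤ 2n-1
  have hall : ∀ r : ℕ, 1 ≤ r → r ≤ 2 * n - 1 → ∑ i, x i ^ r = 0 := by
    intro r
    induction r using Nat.strong_induction_on with
    | _ r ih =>
      intro hr1 hr2
      rcases Nat.even_or_odd r with he | ho
      · obtain ⟨s, hs⟩ := he
        have hs1 : 1 ≤ s := by omega
        have hsum : ∑ i, x i ^ r = (∑ i, x i ^ s) ^ 2 := by
          rw [CharTwo.sum_sq]
          apply Finset.sum_congr rfl
          intro i _
          rw [← pow_mul]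
          congr 1
          omega
        rw [hsum, ih s (by omega) hs1 (by omega), zero_pow two_ne_zero]
      · exact hx r ho hr1 hr2
  -- including r = 0, since char 2 and 2n elements
  have hall0 : ∀ r : ℕ, r ≤ 2 * n - 1 → ∑ i, x i ^ r = 0 := by
    intro r hr
    rcases Nat.eq_zero_or_pos r with h0 | h1
    · subst h0
      simp only [pow_zero, Finset.sum_const, Finset.card_univ, Fintype.card_fin, nsmul_eq_mul,
        mul_one]
      have : ((2 * n : ℕ) : F) = 0 := by
        rw [CharP.cast_eq_zero_iff F 2]
        exact ⟨n, rfl⟩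
      exact this
    · exact hall r h1 hr
  have key : (fun _ : Fin (2 * n) => (1 : F)) = 0 := by
    apply Matrix.eq_zero_of_forall_pow_sum_mul_pow_eq_zero hinj
    intro i
    simp only [one_mul]
    exact hall0 (i : ℕ) (by omega)
  have : (1 : F) = 0 := congrFun key ⟨0, by omega⟩
  exact one_ne_zero this
end

section
/- Let k ≥ 1 and m ≥ 1, let F = GF(2^k) be the finite field with 2^k elements, and let A = {(x, x^3, x^5, …, x^{2m−1}) : x ∈ F} ⊆ F^m, viewed as a subset of the additive group F^m. Then |A| = 2^k, and for every n with 1 ≤ n ≤ m, the sum of any 2n pairwise distinct elements of A is nonzero (i.e., A is a zero-free set of rank 2n in the additive group F^m for every n ≤ m). -/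
/-- Let `F = GF(2^k)` (`k ≥ 1`), `m ≥ 1`, and let
`A = {(x, x³, x⁵, …, x^{2m−1}) : x ∈ F} ⊆ F^m`. Then `|A| = 2^k` and, for every
`1 ≤ n ≤ m`, the sum of any `2n` pairwise distinct elements of `A` is nonzero,
i.e. `A` is a zero-free set of rank `2n` in the additive group `F^m`. -/
theorem galois_moment_curve_zeroFree (k m : ℕ) (hk : 1 ≤ k) (hm : 1 ≤ m) :
    (Set.range (fun x : GaloisField 2 k =>
        fun i : Fin m => x ^ (2 * (i : ℕ) + 1))).ncard = 2 ^ k ∧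
    ∀ n : ℕ, 1 ≤ n → n ≤ m →
      ∀ B : Finset (Fin m → GaloisField 2 k),
        (B : Set (Fin m → GaloisField 2 k)) ⊆
          Set.range (fun x : GaloisField 2 k => fun i : Fin m => x ^ (2 * (i : ℕ) + 1)) →
        B.card = 2 * n → ∑ v ∈ B, v ≠ 0 := by
  classical
  haveI : Fact (Nat.Prime 2) := ⟨Nat.prime_two⟩
  set F := GaloisField 2 k with hF
  set f : F → (Fin m → F) := fun x i => x ^ (2 * (i : ℕ) + 1) with hf
  have hinj : Function.Injective f := by
    intro x y hxy
    have := congrFun hxy ⟨0, hm⟩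
    simpa [hf] using this
  constructor
  · rw [← Set.image_univ, Set.ncard_image_of_injective _ hinj, Set.ncard_univ,
      GaloisField.card 2 k (by omega)]
  · intro n hn hnm B hB hcard hsum
    set S : Finset F := B.preimage f hinj.injOn with hS
    have hmemS : ∀ x, x ∈ S ↔ f x ∈ B := fun x => Finset.mem_preimage
    have himg : S.image f = B := by
      ext w
      simp only [Finset.mem_image]
      constructor
      · rintro ⟨x, hx, rfl⟩; exact (hmemS x).1 hx
      · intro hw
        obtain ⟨x, hx⟩ := hB hw
        exact ⟨x, (hmemS x).2 (hx ▸ hw), hx⟩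
    have hcardS : S.card = 2 * n := by
      rw [← hcard, ← himg, Finset.card_image_of_injective _ hinj]
    have hps : ∀ i : Fin m, ∑ x ∈ S, x ^ (2 * (i : ℕ) + 1) = 0 := by
      intro i
      have h := congrFun hsum i
      rw [← himg, Finset.sum_image (fun a _ b _ h => hinj h)] at h
      simpa [hf, Finset.sum_apply] using h
    have hall : ∀ j, j < 2 * n → ∑ x ∈ S, x ^ j = 0 := by
      intro j
      induction j using Nat.strong_induction_on with
      | _ j ih =>
        intro hj
        rcases Nat.even_or_odd j with ⟨t, ht⟩ | ⟨i, hi⟩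
        · rcases Nat.eq_zero_or_pos t with rfl | htpos
          · have hj0 : j = 0 := by omega
            subst hj0
            simp only [pow_zero, Finset.sum_const, nsmul_eq_mul, mul_one, hcardS]
            have h2 : ((2 : ℕ) : F) = 0 := CharP.cast_eq_zero F 2
            push_cast
            rw [show ((2:F)) = ((2:ℕ):F) by norm_cast, h2, zero_mul]
          · have h2 : j = t * 2 := by omega
            have ht' : t < j := by omega
            have h0 := ih t ht' (by omega)
            calc ∑ x ∈ S, x ^ j = ∑ x ∈ S, (x ^ t) ^ 2 := by
                  simp [h2, pow_mul]
              _ = (∑ x ∈ S, x ^ t) ^ 2 := (sum_pow_char 2 S _).symm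
              _ = 0 := by rw [h0]; ring
        · have him : i < m := by omega
          have := hps ⟨i, him⟩
          rw [hi]
          simpa using this
    let e : Fin (2 * n) ≃ {x // x ∈ S} := (S.equivFin.trans (finCongr hcardS)).symm
    let vv : Fin (2 * n) → F := fun i => (e i : F)
    have hvinj : Function.Injective vv := fun a b hab =>
      e.injective (Subtype.ext hab)
    have hdet : (Matrix.vandermonde vv).det ≠ 0 := by
      rw [Matrix.det_vandermonde]
      apply Finset.prod_ne_zero_iff.mpr
      intro i _
      apply Finset.prod_ne_zero_iff.mpr
      intro j hj
      have hij : i < j := Finset.mem_Ioi.mp hj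
      exact sub_ne_zero_of_ne fun h => absurd (hvinj h.symm) (Fin.ne_of_lt hij)
    have hvec : Matrix.vecMul (fun _ => (1 : F)) (Matrix.vandermonde vv) = 0 := by
      funext j
      simp only [Matrix.vecMul, dotProduct, Matrix.vandermonde_apply, one_mul,
        Pi.zero_apply]
      have heq : ∑ i, vv i ^ (j : ℕ) = ∑ x ∈ S, x ^ (j : ℕ) := by
        rw [← Finset.sum_attach S (fun x => x ^ (j : ℕ))]
        exact Fintype.sum_equiv e _ _ (fun i => rfl)
      rw [heq]
      exact hall j j.isLt
    have hz := Matrix.eq_zero_of_vecMul_eq_zero hdet hvec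
    have h1 : (1 : F) = 0 := congrFun hz ⟨0, by omega⟩
    exact one_ne_zero h1
end
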